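/- arXiv:1704.05621 — 6 statements merged into one kernel-verified Lean document; each statement's English description precedes it below -/
import Mathlib

section
/- Let P be a naturally labeled partial order on {1,2,…,m}. Then for every integer n ≥ 0, F_P(q,[n]_q) = [m]_q! · Σ_{σ ∈ PP(P,n)} q^{|σ|}, as polynomials in q. (Equivalently, the q-Ehrhart polynomial of the order polytope of the dual poset of P equals F_P(q,x)/[m]_q!.) -/
open Finset Polynomial LaurentPolynomial

attribute [local instance] Classical.propDecidable

/-- The value `π_i` of the word of `π` at the 1-based position `i` (values in `{1, …, m}`). -/
def wordAt (m : ℕ) (π : Equiv.Perm (Fin m)) (i : ℕ) : ℕ :=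
  if h : i - 1 < m then ((π ⟨i - 1, h⟩ : Fin m) : ℕ) + 1 else 0

/-- The descent set `Des(π) ⊆ {1, …, m-1}` (1-based positions). -/
def DesSet (m : ℕ) (π : Equiv.Perm (Fin m)) : Finset ℕ :=
  (Finset.Ico 1 m).filter fun i => wordAt m π (i + 1) < wordAt m π i

/-- The number of descents `des(π)`. -/
def desNum (m : ℕ) (π : Equiv.Perm (Fin m)) : ℕ := (DesSet m π).card

/-- The major index `maj(π)`. -/
def majIdx (m : ℕ) (π : Equiv.Perm (Fin m)) : ℕ := ∑ i ∈ DesSet m π, i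

/-- The partial order `P` on `{1,…,m}` (encoded as `Fin m`) is naturally labeled:
`x ≤_P y` implies `x ≤ y` as integers. -/
def NatLabeled (m : ℕ) (P : PartialOrder (Fin m)) : Prop :=
  ∀ x y : Fin m, P.le x y → x ≤ y

/-- `π` is a linear extension of `P`: `π_i ≤_P π_j` implies `i ≤ j`. -/
def IsLinExt (m : ℕ) (P : PartialOrder (Fin m)) (π : Equiv.Perm (Fin m)) : Prop :=
  ∀ i j : Fin m, P.le (π i) (π j) → i ≤ j

/-- `mc(x)`: the maximum number of elements of a chain of `P` whose largest element is `x`. -/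
noncomputable def mc (m : ℕ) (P : PartialOrder (Fin m)) (x : Fin m) : ℕ :=
  sSup {k : ℕ | ∃ s : Finset (Fin m),
    s.card = k ∧ IsChain P.le ↑s ∧ x ∈ s ∧ ∀ y ∈ s, P.le y x}

/-- `m̄c(x)`: the maximum number of elements of a chain of `P` whose smallest element is `x`. -/
noncomputable def mcUp (m : ℕ) (P : PartialOrder (Fin m)) (x : Fin m) : ℕ :=
  sSup {k : ℕ | ∃ s : Finset (Fin m),
    s.card = k ∧ IsChain P.le ↑s ∧ x ∈ s ∧ ∀ y ∈ s, P.le x y}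

/-- The `q`-integer `[n]_q` for `n ∈ ℤ`, as a Laurent polynomial:
`[n]_q = 1 + q + ⋯ + q^{n-1}` for `n ≥ 0` and `[-n]_q = -q^{-n} [n]_q`. -/
noncomputable def qInt (n : ℤ) : LaurentPolynomial ℤ :=
  if 0 ≤ n then ∑ i ∈ Finset.range n.toNat, T (i : ℤ)
  else -(T n * ∑ i ∈ Finset.range (-n).toNat, T (i : ℤ))

/-- The polynomial `F_P(q,x) = Σ_{π ∈ L(P)} q^{maj π} Π_{i=1}^m ([i - des π]_q + q^{i - des π} x)`,
an element of `(ℤ[q,q⁻¹])[x]` (it in fact lies in `ℤ[q,x]`). -/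
noncomputable def Fpoly (m : ℕ) (P : PartialOrder (Fin m)) : Polynomial (LaurentPolynomial ℤ) :=
  ∑ π ∈ Finset.univ.filter (fun π => IsLinExt m P π),
    Polynomial.C (T (majIdx m π : ℤ)) *
      ∏ i ∈ Finset.Icc 1 m,
        (Polynomial.C (qInt ((i : ℤ) - desNum m π)) +
          Polynomial.C (T ((i : ℤ) - desNum m π)) * Polynomial.X)

/-- The Newton polygon of an element of `(ℤ[q,q⁻¹])[x]`, in the `(q,x)`-plane. -/
noncomputable def NTL (f : Polynomial (LaurentPolynomial ℤ)) : Set (ℝ × ℝ) :=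
  convexHull ℝ {p : ℝ × ℝ | ∃ (i : ℤ) (k : ℕ), (f.coeff k).coeff i ≠ 0 ∧ p = ((i : ℝ), (k : ℝ))}

/-- The Newton polygon of an element of `ℤ[q][x]`, in the `(q,x)`-plane. -/
noncomputable def NTP (f : Polynomial (Polynomial ℤ)) : Set (ℝ × ℝ) :=
  convexHull ℝ {p : ℝ × ℝ | ∃ (i k : ℕ), (f.coeff k).coeff i ≠ 0 ∧ p = ((i : ℝ), (k : ℝ))}

/-- The polygon `C(a_1,…,a_m;h)`: the convex hull of `(0,0)`, `(a_1+⋯+a_i, i)` for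
`1 ≤ i ≤ m`, `(h,m)` and `(h-m,0)`. -/
noncomputable def Cpolygon (m : ℕ) (a : ℕ → ℕ) (h : ℕ) : Set (ℝ × ℝ) :=
  convexHull ℝ ({((0 : ℝ), (0 : ℝ)), ((h : ℝ), (m : ℝ)), ((h : ℝ) - (m : ℝ), (0 : ℝ))} ∪
    {p : ℝ × ℝ | ∃ i ∈ Finset.Icc 1 m, p = ((∑ j ∈ Finset.Icc 1 i, (a j : ℝ)), (i : ℝ))})

/-- The index of the descent block of `π` containing the 1-based position `j`. -/
def blockIdx (m : ℕ) (π : Equiv.Perm (Fin m)) (j : ℕ) : ℕ :=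
  1 + ((Finset.Ico 1 j).filter (fun i => i ∉ DesSet m π)).card

/-- `DB_i(π)`: the set of entries of the `i`-th descent block of `π`. -/
def DB (m : ℕ) (π : Equiv.Perm (Fin m)) (i : ℕ) : Finset (Fin m) :=
  Finset.univ.filter fun x => blockIdx m π (((π.symm x : Fin m) : ℕ) + 1) = i

/-- `PP(P,n)`: the set of `P`-partitions (order-reversing maps) with all parts at most `n`,
encoded as functions `Fin m → Fin (n+1)`. -/
noncomputable def PPset (m : ℕ) (P : PartialOrder (Fin m)) (n : ℕ) :
    Finset (Fin m → Fin (n + 1)) :=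
  Finset.univ.filter fun σ => ∀ x y : Fin m, P.le x y → σ y ≤ σ x

/-- `|σ| = σ(1) + ⋯ + σ(m)`. -/
def sizePP (m n : ℕ) (σ : Fin m → Fin (n + 1)) : ℕ := ∑ i : Fin m, (σ i : ℕ)

/-- The `q`-integer `[n]_q` for `n ∈ ℕ`, as an ordinary polynomial in `q`. -/
noncomputable def qIntP (n : ℕ) : Polynomial ℤ := ∑ i ∈ Finset.range n, Polynomial.X ^ i

/-- The `q`-factorial `[n]_q!`. -/
noncomputable def qFact (n : ℕ) : Polynomial ℤ := ∏ i ∈ Finset.Icc 1 n, qIntP i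

/-- The dual poset `P̄` : `x ≤_{P̄} y` iff `y ≤_P x`. -/
def dualP (m : ℕ) (P : PartialOrder (Fin m)) : PartialOrder (Fin m) where
  le x y := P.le y x
  lt x y := P.lt y x
  le_refl x := P.le_refl x
  le_trans a b c h1 h2 := P.le_trans c b a h2 h1
  le_antisymm a b h1 h2 := P.le_antisymm a b h2 h1
  lt_iff_le_not_ge a b := P.lt_iff_le_not_ge b a

/-- The canonical ring map `ℤ[q] → ℚ(q)`. -/
noncomputable def toRF : Polynomial ℤ →+* RatFunc ℚ :=
  (algebraMap (Polynomial ℚ) (RatFunc ℚ)).comp (Polynomial.mapRingHom (Int.castRingHom ℚ))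

/-- `W(n·O(P), q) = Σ_σ q^{|σ|}`, the sum being over all order-preserving maps
`σ : P → {0,…,n}`. -/
noncomputable def Wpoly (m : ℕ) (P : PartialOrder (Fin m)) (n : ℕ) : Polynomial ℤ :=
  ∑ σ ∈ (Finset.univ.filter fun σ : Fin m → Fin (n + 1) =>
      ∀ x y : Fin m, P.le x y → σ x ≤ σ y),
    Polynomial.X ^ (∑ i : Fin m, (σ i : ℕ))

/-- The polynomial `q^{mj - s(s-1)/2} Π_{i=1}^{s-1} (x - [i]_q) Π_{i=1}^{m-s} (q^i x + [i]_q)`. -/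
noncomputable def tSummand (m s mj : ℕ) : Polynomial (LaurentPolynomial ℤ) :=
  Polynomial.C (T ((mj : ℤ) - (s * (s - 1) / 2 : ℕ))) *
    (∏ i ∈ Finset.Icc 1 (s - 1), (Polynomial.X - Polynomial.C (qInt (i : ℤ)))) *
    ∏ i ∈ Finset.Icc 1 (m - s),
      (Polynomial.C (T (i : ℤ)) * Polynomial.X + Polynomial.C (qInt (i : ℤ)))

/-- `t(π,k)`: the coefficient of `x^{k-1}` in
`q^{maj π - s(s-1)/2} Π_{i=1}^{s-1} (x - [i]_q) Π_{i=1}^{m-s} (q^i x + [i]_q)`,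
where `s = des π`. -/
noncomputable def tpoly (m : ℕ) (π : Equiv.Perm (Fin m)) (k : ℕ) : LaurentPolynomial ℤ :=
  (tSummand m (desNum m π) (majIdx m π)).coeff (k - 1)

/-- The polynomial `A(q,x) = Π_{i=1}^m (q^i x + [i]_q)`. -/
noncomputable def Apoly (m : ℕ) : Polynomial (LaurentPolynomial ℤ) :=
  ∏ i ∈ Finset.Icc 1 m,
    (Polynomial.C (T (i : ℤ)) * Polynomial.X + Polynomial.C (qInt (i : ℤ)))

/-- The polynomial `B(q,x) = x Σ_{π ∈ L(P), des π ≥ 1} q^{maj π - s(s-1)/2}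
Π_{i=1}^{s-1} (x - [i]_q) Π_{i=1}^{m-s} (q^i x + [i]_q)`, where `s = des π`;
one has `F_P(q,x) = A(q,x) + B(q,x)`. -/
noncomputable def Bpoly (m : ℕ) (P : PartialOrder (Fin m)) : Polynomial (LaurentPolynomial ℤ) :=
  Polynomial.X *
    ∑ π ∈ Finset.univ.filter (fun π => IsLinExt m P π ∧ 1 ≤ desNum m π),
      tSummand m (desNum m π) (majIdx m π)

/-!
Evaluating at `x = [n]_q` turns each factor `[i - d]_q + q^{i - d} x` into `[n - d + i]_q`, so a
linear extension `π` with `d = des π` contributes `q^{maj π} ∏_{i=1}^m [n - d + i]_q`.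

On the other side, sorting a `P`-partition `σ` decreasingly, with ties broken by increasing label,
gives a permutation `π`; natural labeling makes `π` a linear extension, and `σ ∘ π` is weakly
decreasing and strictly decreasing at the descents of `π` ("`π`-compatible"). This is a bijection
(Stanley's fundamental lemma). Subtracting from a `π`-compatible `f` the number of descents of `π`
to the right of each position (these numbers add up to `maj π`) leaves an arbitrary weakly decreasing sequence bounded by `n - d`,
and `[m]_q!` times the generating function of these is `∏_{i=1}^m [n - d + i]_q`. When `d > n`
there are no compatible `f`, and the product contains the factor `[0]_q = 0`.
-/

lemma one_sub_T_mul_qInt (n : ℤ) : (1 - T 1) * qInt n = 1 - T n := by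
  have geom (k : ℕ) : (1 - T 1) * ∑ i ∈ range k, (T i : LaurentPolynomial ℤ) = 1 - T k := by
    simpa [T_pow] using mul_neg_geom_sum (T 1 : LaurentPolynomial ℤ) k
  unfold qInt
  split_ifs with hn
  · rw [geom, Int.toNat_of_nonneg hn]
  · rw [mul_neg, mul_left_comm, geom, Int.toNat_of_nonneg (by omega), mul_sub, ← T_add]
    simp

lemma one_sub_T_ne_zero : (1 - T 1 : LaurentPolynomial ℤ) ≠ 0 := by
  intro h
  simpa [← T_zero] using congrArg (fun p : LaurentPolynomial ℤ => p.coeff 1) h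

lemma qInt_add (a b : ℤ) : qInt (a + b) = qInt a + T a * qInt b := by
  refine mul_left_cancel₀ one_sub_T_ne_zero ?_
  rw [mul_add, mul_left_comm, one_sub_T_mul_qInt, one_sub_T_mul_qInt, one_sub_T_mul_qInt, T_add]
  ring

lemma qInt_zero : qInt 0 = 0 := by simp [qInt]

section Box

noncomputable def boxSet (m M : ℕ) : Finset (Fin m → ℕ) :=
  (Fintype.piFinset fun _ => range (M + 1)).filter Antitone

noncomputable def boxSum (m M : ℕ) : LaurentPolynomial ℤ :=
  ∑ g ∈ boxSet m M, T ↑(∑ i, g i)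

lemma boxSum_zero_left (M : ℕ) : boxSum 0 M = 1 := by
  simp [boxSum, boxSet, Subsingleton.antitone]

lemma Fin.antitone_cons {α : Type*} [Preorder α] {m : ℕ} {a : α} {f : Fin m → α} :
    Antitone (Fin.cons a f : Fin (m + 1) → α) ↔ (∀ i, f i ≤ a) ∧ Antitone f := by
  simp only [antitone_iff_forall_lt]
  exact Fin.liftFun_cons (· ≥ ·)

lemma cons_mem_boxSet_iff {m M k : ℕ} {g : Fin m → ℕ} :
    (Fin.cons k g : Fin (m + 1) → ℕ) ∈ boxSet (m + 1) M ↔ k ≤ M ∧ g ∈ boxSet m k := by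
  simp only [boxSet, mem_filter, Fin.antitone_cons, Fintype.mem_piFinset, Fin.forall_fin_succ,
    Fin.cons_zero, Fin.cons_succ, mem_range]
  constructor
  · rintro ⟨⟨hk, -⟩, hg, ha⟩
    exact ⟨by omega, fun i => by have := hg i; omega, ha⟩
  · rintro ⟨hk, hg, ha⟩
    exact ⟨⟨by omega, fun i => by have := hg i; omega⟩, fun i => by have := hg i; omega, ha⟩

lemma boxSum_succ_left (m M : ℕ) :
    boxSum (m + 1) M = ∑ k ∈ range (M + 1), T k * boxSum m k := by
  simp_rw [boxSum, mul_sum, ← T_add]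
  rw [sum_sigma']
  refine sum_nbij' (fun f => ⟨f 0, Fin.tail f⟩) (fun p => Fin.cons p.1 p.2) ?_ ?_ ?_ ?_ ?_
  · intro f hf
    rw [← Fin.cons_self_tail f, cons_mem_boxSet_iff] at hf
    simpa using hf
  · rintro ⟨k, g⟩ hp
    rw [mem_sigma, mem_range] at hp
    exact cons_mem_boxSet_iff.2 ⟨by omega, hp.2⟩
  · intro f _
    simp
  · intro p _
    simp
  · intro f _
    simp [Fin.sum_univ_succ, Fin.tail]

lemma prod_Icc_one_succ {M : Type*} [CommMonoid M] (f : ℕ → M) (m : ℕ) :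
    ∏ i ∈ Icc 1 (m + 1), f i = f 1 * ∏ i ∈ Icc 1 m, f (i + 1) := by
  induction m with
  | zero => simp
  | succ m ih =>
    rw [prod_Icc_succ_top (by omega), ih, prod_Icc_succ_top (by omega), mul_assoc]

lemma qInt_succ_mul_sum_T_mul_prod (m M : ℕ) :
    qInt (m + 1) * ∑ k ∈ range (M + 1), T k * ∏ i ∈ Icc 1 m, qInt (k + i) =
      ∏ i ∈ Icc 1 (m + 1), qInt (M + i) := by
  induction M with
  | zero =>
    rw [sum_range_one, prod_Icc_succ_top (by omega)]
    simp [mul_comm]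
  | succ M ih =>
    have hshift : ∏ i ∈ Icc 1 m, qInt (M + (i + 1 : ℕ)) =
        ∏ i ∈ Icc 1 m, qInt ((M + 1 : ℕ) + i) :=
      prod_congr rfl fun i _ => by push_cast; ring_nf
    have hsplit : qInt ((M + 1 : ℕ) + (m + 1 : ℕ)) = qInt (M + 1) + T (M + 1) * qInt (m + 1) := by
      rw [qInt_add]
      push_cast
      ring_nf
    rw [sum_range_succ, mul_add, ih, prod_Icc_one_succ, prod_Icc_succ_top (by omega), hshift,
      hsplit]
    push_cast
    ring

lemma qFactorial_mul_boxSum (m M : ℕ) :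
    (∏ i ∈ Icc 1 m, qInt i) * boxSum m M = ∏ i ∈ Icc 1 m, qInt (M + i) := by
  induction m generalizing M with
  | zero => simp [boxSum_zero_left]
  | succ m ih =>
    rw [boxSum_succ_left, prod_Icc_succ_top (by omega), mul_sum, ← qInt_succ_mul_sum_T_mul_prod,
      mul_sum]
    refine sum_congr rfl fun k _ => ?_
    rw [← ih k]
    push_cast
    ring

end Box

section Descents

variable {m : ℕ} (π : Equiv.Perm (Fin m))

/-- `DesSet` uses 1-based positions: `(j : ℕ) ∈ DesSet m π` is a descent between the 0-based
positions `j - 1` and `j`. So this counts the descents of `π` to the right of position `i`. -/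
def descentsAfter (i : Fin m) : ℕ := #{s ∈ DesSet m π | (i : ℕ) < s}

lemma mem_DesSet_iff_of_covBy {i j : Fin m} (h : i ⋖ j) : (j : ℕ) ∈ DesSet m π ↔ π j < π i := by
  obtain ⟨i, hi⟩ := i
  obtain ⟨j, hj⟩ := j
  obtain rfl : i + 1 = j := by simpa using h
  simp [DesSet, wordAt, hj, hi]

lemma descentsAfter_of_covBy {i j : Fin m} (h : i ⋖ j) :
    descentsAfter π i = descentsAfter π j + if (j : ℕ) ∈ DesSet m π then 1 else 0 := by
  have hij : (i : ℕ) + 1 = j := by simpa using h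
  simp only [descentsAfter, card_filter, ← sum_ite_eq' (DesSet m π) (j : ℕ) fun _ => 1,
    ← sum_add_distrib]
  refine sum_congr rfl fun s _ => ?_
  split_ifs <;> omega

lemma descentsAfter_antitone : Antitone (descentsAfter π) := fun _ _ hij =>
  card_le_card (monotone_filter_right _ fun _ _ hs => lt_of_le_of_lt hij hs)

lemma descentsAfter_le_desNum (i : Fin m) : descentsAfter π i ≤ desNum m π :=
  card_filter_le _ _

lemma descentsAfter_eq_desNum {i : Fin m} (hi : (i : ℕ) = 0) :
    descentsAfter π i = desNum m π := by
  rw [descentsAfter, desNum, filter_true_of_mem]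
  intro s hs
  simp only [DesSet, mem_filter, mem_Ico] at hs
  omega

lemma descentsAfter_eq_zero {i : Fin m} (hi : (i : ℕ) + 1 = m) : descentsAfter π i = 0 := by
  rw [descentsAfter, card_eq_zero, filter_eq_empty_iff]
  intro s hs
  simp only [DesSet, mem_filter, mem_Ico] at hs
  omega

lemma sum_descentsAfter : ∑ i, descentsAfter π i = majIdx m π := by
  simp only [descentsAfter, card_filter]
  rw [sum_comm, majIdx]
  refine sum_congr rfl fun s hs => ?_
  simp only [DesSet, mem_filter, mem_Ico] at hs
  rw [← card_filter, Fin.card_filter_val_lt, min_eq_right hs.1.2.le]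

lemma desNum_le_sub_one : desNum m π ≤ m - 1 := by
  simpa [desNum, DesSet] using card_filter_le (Ico 1 m) _

lemma lt_of_descentsAfter_eq {i j : Fin m} (hij : i < j)
    (h : descentsAfter π i = descentsAfter π j) : π i < π j := by
  refine strictMonoOn_of_lt_succ Set.ordConnected_Icc (fun a ha hia hsa => ?_)
    ⟨le_rfl, hij.le⟩ ⟨hij.le, le_rfl⟩ hij
  have hcov := Order.covBy_succ_of_not_isMax ha
  have hsucc := descentsAfter_of_covBy π hcov
  have := descentsAfter_antitone π hia.1
  have := descentsAfter_antitone π hsa.2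
  have hdes : ((Order.succ a : Fin m) : ℕ) ∉ DesSet m π := fun hd => by
    rw [if_pos hd] at hsucc
    omega
  rw [mem_DesSet_iff_of_covBy π hcov, not_lt] at hdes
  exact lt_of_le_of_ne hdes (π.injective.ne hcov.lt.ne)

end Descents

section Compatible

variable {m : ℕ} {α : Type*}

def Compatible [Preorder α] (π : Equiv.Perm (Fin m)) (f : Fin m → α) : Prop :=
  Antitone f ∧ ∀ i j, i < j → f i = f j → π i < π j

noncomputable def compatibles [Preorder α] (π : Equiv.Perm (Fin m)) (t : Finset α) :
    Finset (Fin m → α) :=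
  (Fintype.piFinset fun _ => t).filter (Compatible π)

lemma mem_compatibles [Preorder α] {π : Equiv.Perm (Fin m)} {t : Finset α} {f : Fin m → α} :
    f ∈ compatibles π t ↔ (∀ i, f i ∈ t) ∧ Compatible π f := by
  rw [compatibles, mem_filter, Fintype.mem_piFinset]

lemma compatible_iff_eq_sort [LinearOrder α] {π : Equiv.Perm (Fin m)} {f : Fin m → α} :
    Compatible π f ↔ π = Tuple.sort (OrderDual.toDual ∘ f ∘ π.symm) := by
  rw [Tuple.eq_sort_iff, Function.comp_assoc, Function.comp_assoc, Equiv.symm_comp_self,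
    Function.comp_id, monotone_toDual_comp_iff]
  simp [Compatible]

variable (π : Equiv.Perm (Fin m))

lemma compatible_add_descentsAfter {g : Fin m → ℕ} (hg : Antitone g) :
    Compatible π (g + descentsAfter π) := by
  refine ⟨hg.add (descentsAfter_antitone π), fun i j hij heq => lt_of_descentsAfter_eq π hij ?_⟩
  have := hg hij.le
  have := descentsAfter_antitone π hij.le
  simp only [Pi.add_apply] at heq
  omega

variable {π}

lemma Compatible.antitone_sub_descentsAfter {f : Fin m → ℕ} (hf : Compatible π f) :
    Antitone fun i => (f i : ℤ) - descentsAfter π i := by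
  refine antitone_of_succ_le fun a ha => ?_
  have hcov := Order.covBy_succ_of_not_isMax ha
  have hle := hf.1 hcov.le
  rw [descentsAfter_of_covBy π hcov]
  split_ifs with hdes
  · have : f (Order.succ a) < f a := hle.lt_of_ne fun heq =>
      lt_asymm ((mem_DesSet_iff_of_covBy π hcov).1 hdes) (hf.2 _ _ hcov.lt heq.symm)
    push_cast
    omega
  · push_cast
    omega

lemma Compatible.descentsAfter_le {f : Fin m → ℕ} (hf : Compatible π f) :
    descentsAfter π ≤ f := by
  intro i
  have hlast : i ≤ ⟨m - 1, by have := i.2; omega⟩ := Fin.mk_le_mk.2 (by omega)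
  have := hf.antitone_sub_descentsAfter hlast
  dsimp only at this
  rw [descentsAfter_eq_zero π (Nat.sub_add_cancel (by have := i.2; omega))] at this
  exact Int.ofNat_le.mp (by omega)

lemma Compatible.antitone_tsub {f : Fin m → ℕ} (hf : Compatible π f) :
    Antitone (f - descentsAfter π) := fun i j hij => by
  have := hf.antitone_sub_descentsAfter hij
  dsimp only at this
  have := hf.descentsAfter_le i
  have := hf.descentsAfter_le j
  simp only [Pi.sub_apply]
  omega

variable (π) (n : ℕ)

lemma sum_compatibles_of_desNum_le (hd : desNum m π ≤ n) :
    ∑ f ∈ compatibles π (range (n + 1)), T ↑(∑ i, f i) =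
      T (majIdx m π) * boxSum m (n - desNum m π) := by
  rw [boxSum, mul_sum]
  refine sum_nbij' (· - descentsAfter π) (· + descentsAfter π) ?_ ?_ ?_ ?_ ?_
  · intro f hf
    simp only [mem_compatibles, mem_range] at hf
    refine mem_filter.2 ⟨Fintype.mem_piFinset.2 fun i => mem_range.2 ?_, hf.2.antitone_tsub⟩
    set i₀ : Fin m := ⟨0, by have := i.2; omega⟩
    have h0 := hf.2.antitone_tsub (show i₀ ≤ i from Nat.zero_le _)
    have := hf.1 i₀
    simp only [Pi.sub_apply, descentsAfter_eq_desNum π (rfl : (i₀ : ℕ) = 0)] at h0 ⊢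
    omega
  · intro g hg
    simp only [boxSet, mem_filter, Fintype.mem_piFinset, mem_range] at hg
    refine mem_compatibles.2 ⟨fun i => mem_range.2 ?_, compatible_add_descentsAfter π hg.2⟩
    have := hg.1 i
    have := descentsAfter_le_desNum π i
    simp only [Pi.add_apply]
    omega
  · intro f hf
    exact tsub_add_cancel_of_le (mem_compatibles.1 hf).2.descentsAfter_le
  · intro g _
    exact add_tsub_cancel_right g _
  · intro f hf
    have hc := (mem_compatibles.1 hf).2.descentsAfter_le
    rw [← T_add, ← sum_descentsAfter π, ← Nat.cast_add, ← sum_add_distrib]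
    congr 2
    exact sum_congr rfl fun i _ => (add_tsub_cancel_of_le (hc i)).symm

lemma compatibles_eq_empty (hd : n < desNum m π) : compatibles π (range (n + 1)) = ∅ := by
  refine eq_empty_iff_forall_notMem.2 fun f hf => ?_
  have := desNum_le_sub_one π
  set i₀ : Fin m := ⟨0, by omega⟩
  have := mem_range.1 ((mem_compatibles.1 hf).1 i₀)
  have : descentsAfter π i₀ ≤ f i₀ := (mem_compatibles.1 hf).2.descentsAfter_le i₀
  rw [descentsAfter_eq_desNum π (rfl : (i₀ : ℕ) = 0)] at this
  omega

lemma qFactorial_mul_sum_compatibles :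
    (∏ i ∈ Icc 1 m, qInt i) * ∑ f ∈ compatibles π (range (n + 1)), T ↑(∑ i, f i) =
      T (majIdx m π) * ∏ i ∈ Icc 1 m, qInt (i - desNum m π + n) := by
  rcases le_or_gt (desNum m π) n with hd | hd
  · rw [sum_compatibles_of_desNum_le π n hd, mul_left_comm, qFactorial_mul_boxSum]
    refine congrArg _ (prod_congr rfl fun i _ => congrArg qInt ?_)
    push_cast [hd]
    ring
  · have hzero : desNum m π - n ∈ Icc 1 m := by
      have := desNum_le_sub_one π
      rw [mem_Icc]
      omega
    rw [compatibles_eq_empty π n hd, sum_empty, mul_zero, prod_eq_zero hzero, mul_zero]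
    rw [Nat.cast_sub hd.le]
    simp [qInt_zero]

end Compatible

section FundamentalLemma

variable {m : ℕ} {α : Type*}

noncomputable def pPartitions [Preorder α] (P : PartialOrder (Fin m)) (t : Finset α) :
    Finset (Fin m → α) :=
  (Fintype.piFinset fun _ => t).filter fun σ => ∀ x y, P.le x y → σ y ≤ σ x

lemma mem_pPartitions [Preorder α] {P : PartialOrder (Fin m)} {t : Finset α} {σ : Fin m → α} :
    σ ∈ pPartitions P t ↔ (∀ i, σ i ∈ t) ∧ ∀ x y, P.le x y → σ y ≤ σ x := by
  rw [pPartitions, mem_filter, Fintype.mem_piFinset]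

theorem sum_pPartitions_eq_sum_linExt {β : Type*} [LinearOrder α] [AddCommMonoid β]
    (P : PartialOrder (Fin m)) (hP : NatLabeled m P) (t : Finset α) (φ : (Fin m → α) → β) :
    ∑ σ ∈ pPartitions P t, φ σ =
      ∑ π ∈ univ.filter (IsLinExt m P), ∑ f ∈ compatibles π t, φ (f ∘ π.symm) := by
  rw [sum_sigma']
  refine sum_nbij'
    (fun σ => ⟨Tuple.sort (OrderDual.toDual ∘ σ), σ ∘ Tuple.sort (OrderDual.toDual ∘ σ)⟩)
    (fun p => p.2 ∘ p.1.symm) ?_ ?_ ?_ ?_ ?_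
  · intro σ hσ
    rw [mem_pPartitions] at hσ
    set π := Tuple.sort (OrderDual.toDual ∘ σ)
    have hc : Compatible π (σ ∘ π) := compatible_iff_eq_sort.2 (by simp [π, Function.comp_assoc])
    refine mem_sigma.2 ⟨mem_filter.2 ⟨mem_univ _, fun i j hle => ?_⟩,
      mem_compatibles.2 ⟨fun i => hσ.1 _, hc⟩⟩
    by_contra! hji
    have heq : σ (π i) = σ (π j) := le_antisymm (hc.1 (Fin.le_of_lt hji)) (hσ.2 _ _ hle)
    exact not_le.2 (hc.2 j i hji heq.symm) (hP _ _ hle)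
  · rintro ⟨π, f⟩ hp
    rw [mem_sigma, mem_filter, mem_compatibles] at hp
    obtain ⟨⟨-, hlin⟩, hf, hc⟩ := hp
    refine mem_pPartitions.2 ⟨fun x => hf _, fun x y hle => hc.1 (hlin _ _ ?_)⟩
    simpa using hle
  · intro σ _
    simp [Function.comp_assoc]
  · rintro ⟨π, f⟩ hp
    have hc := (mem_compatibles.1 (mem_sigma.1 hp).2).2
    simp only
    rw [← compatible_iff_eq_sort.1 hc]
    simp [Function.comp_assoc]
  · intro σ _
    simp [Function.comp_assoc]

end FundamentalLemma

lemma sum_PPset_eq_sum_pPartitions (m : ℕ) (P : PartialOrder (Fin m)) (n : ℕ) :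
    ∑ σ ∈ PPset m P n, (T (sizePP m n σ : ℤ) : LaurentPolynomial ℤ) =
      ∑ σ ∈ pPartitions P (range (n + 1)), T ↑(∑ i, σ i) := by
  refine sum_bij' (fun σ _ x => (σ x : ℕ))
    (fun τ hτ x => ⟨τ x, mem_range.1 ((mem_pPartitions.1 hτ).1 x)⟩) ?_ ?_ ?_ ?_ ?_
  · intro σ hσ
    simp only [PPset, mem_filter, mem_univ, true_and] at hσ
    exact mem_pPartitions.2 ⟨fun x => mem_range.2 (σ x).2, fun x y hle => hσ x y hle⟩
  · intro τ hτ
    simp only [PPset, mem_filter, mem_univ, true_and]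
    exact fun x y hle => Fin.mk_le_mk.2 ((mem_pPartitions.1 hτ).2 x y hle)
  · intro σ _
    rfl
  · intro τ _
    rfl
  · intro σ _
    rfl

lemma eval_Fpoly_qInt (m : ℕ) (P : PartialOrder (Fin m)) (n : ℕ) :
    (Fpoly m P).eval (qInt n) =
      ∑ π ∈ univ.filter (IsLinExt m P),
        T (majIdx m π) * ∏ i ∈ Icc 1 m, qInt (i - desNum m π + n) := by
  simp [Fpoly, eval_finsetSum, eval_prod, qInt_add]

theorem statement3_general (m : ℕ) (P : PartialOrder (Fin m))
    (hnat : NatLabeled m P) (n : ℕ) :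
    (Fpoly m P).eval (qInt (n : ℤ)) =
      (∏ i ∈ Finset.Icc 1 m, qInt (i : ℤ)) *
        ∑ σ ∈ PPset m P n, T (sizePP m n σ : ℤ) := by
  rw [eval_Fpoly_qInt, sum_PPset_eq_sum_pPartitions, sum_pPartitions_eq_sum_linExt P hnat,
    mul_sum]
  refine sum_congr rfl fun π _ => ?_
  simp_rw [Function.comp_apply, Equiv.sum_comp π.symm]
  exact (qFactorial_mul_sum_compatibles π n).symm

theorem statement3 (m : ℕ) (hm : 1 ≤ m) (P : PartialOrder (Fin m))
    (hnat : NatLabeled m P) (n : ℕ) :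
    (Fpoly m P).eval (qInt (n : ℤ)) =
      (∏ i ∈ Finset.Icc 1 m, qInt (i : ℤ)) *
        ∑ σ ∈ PPset m P n, T (sizePP m n σ : ℤ) :=
  statement3_general m P hnat n
end

section
/- Let P be a partial order on {1,2,…,m} whose dual poset P̄ is naturally labeled, and let a_1 ≤ ⋯ ≤ a_m be the increasing rearrangement of m̄c(1),…,m̄c(m). Let N_P(q,x) be the numerator of the q-Ehrhart polynomial E_P of the order polytope of P, and let φ(q) ∈ ℤ[q] be the polynomial with F_{P̄}(q,x) = N_P(q,x)·φ(q), and set r = deg φ. Then NT(N_P(q,x)) = C(a_1,…,a_m;h) for some integer h ≥ a_1+⋯+a_m if and only if NT(F_{P̄}(q,x)) = C(a_1,…,a_m;h′) for some integer h′ ≥ a_1+⋯+a_m; moreover, in this case h′ = h + r. -/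
open Finset Polynomial LaurentPolynomial

attribute [local instance] Classical.propDecidable

/-!
Since `P̄` is naturally labeled, only the identity permutation contributes to `F_{P̄}(q,0)`, which
is therefore `[m]_q!`; so `φ(0) ≠ 0`. Hence the coefficient of `x^k` in `F_{P̄} = N_P φ` is
supported exactly from the trailing degree of the coefficient `N_k` of `x^k` in `N_P` up to
`deg N_k + deg φ`, which gives `NT(F_{P̄}) = NT(N_P) + [0,r] × {0}`. Because every `m̄c(x) ≥ 1`,
`C(a;h) + [0,r] × {0} = C(a;h+r)`. Conversely, if `NT(N_P) + [0,r] × {0} = C(a;h')`, then the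
left end `(a_1+⋯+a_m, m)` of the top row of `C(a;h')` forces `h' ≥ a_1+⋯+a_m + r`, and Rådström's
cancellation law for closed convex sets gives `NT(N_P) = C(a;h'-r)`. Finally the top row
`[a_1+⋯+a_m, h] × {m}` of `C(a;h)` determines `h`.
-/

open Pointwise

lemma wordAt_succ {m : ℕ} (π : Equiv.Perm (Fin m)) {j : ℕ} (hj : j < m) :
    wordAt m π (j + 1) = π ⟨j, hj⟩ + 1 := by
  simp [wordAt, hj]

lemma DesSet_eq_empty_iff {m : ℕ} (π : Equiv.Perm (Fin m)) : DesSet m π = ∅ ↔ π = 1 := by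
  refine ⟨fun h => ?_, fun h => ?_⟩
  · have hmono : Monotone π := by
      cases m with
      | zero => exact fun x => x.elim0
      | succ n =>
        refine Fin.monotone_iff_le_succ.mpr fun i => ?_
        have hi : (i : ℕ) + 1 ∉ DesSet (n + 1) π := by simp [h]
        simp only [DesSet, Finset.mem_filter, Finset.mem_Ico, not_and, not_lt] at hi
        have := hi ⟨by omega, by omega⟩
        rwa [wordAt_succ π (by omega : (i : ℕ) + 1 < n + 1),
          wordAt_succ π (by omega : (i : ℕ) < n + 1), add_le_add_iff_right,
          Fin.val_fin_le] at this
    exact Equiv.ext fun x => congrFun (hmono.strictMono_of_injective π.injective).eq_id x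
  · subst h
    refine Finset.filter_eq_empty_iff.mpr fun i hi => ?_
    obtain ⟨j, rfl⟩ : ∃ j, i = j + 1 := ⟨i - 1, by simp at hi; omega⟩
    simp only [Finset.mem_Ico] at hi
    rw [wordAt_succ 1 (by omega : j + 1 < m), wordAt_succ 1 (by omega : j < m)]
    simp

lemma desNum_le (m : ℕ) (π : Equiv.Perm (Fin m)) : desNum m π ≤ m :=
  (Finset.card_filter_le _ _).trans (by simp)

lemma isLinExt_one {m : ℕ} {Q : PartialOrder (Fin m)} (hQ : NatLabeled m Q) :
    IsLinExt m Q 1 :=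
  fun i j => hQ i j

lemma qInt_natCast (i : ℕ) : qInt (i : ℤ) = Polynomial.toLaurent (qIntP i) := by
  simp [qInt, qIntP, Polynomial.toLaurent_X_pow]

lemma qFact_coeff_zero (m : ℕ) : (qFact m).coeff 0 = 1 := by
  rw [qFact, Polynomial.coeff_zero_eq_eval_zero, Polynomial.eval_prod]
  refine Finset.prod_eq_one fun i hi => ?_
  obtain ⟨k, rfl⟩ : ∃ k, i = k + 1 := ⟨i - 1, by simp at hi; omega⟩
  simp [qIntP, Finset.sum_range_succ', Polynomial.eval_finsetSum]

-- For `des π ≥ 1` the factor `i = des π` of the product is `[0]_q = 0`.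
lemma Fpoly_coeff_zero {m : ℕ} {Q : PartialOrder (Fin m)} (hQ : NatLabeled m Q) :
    (Fpoly m Q).coeff 0 = Polynomial.toLaurent (qFact m) := by
  rw [Polynomial.coeff_zero_eq_eval_zero, Fpoly, Polynomial.eval_finsetSum,
    Finset.sum_eq_single_of_mem 1 (by simpa using isLinExt_one hQ)]
  · simp [Polynomial.eval_prod, majIdx, desNum, (DesSet_eq_empty_iff 1).mpr rfl, qFact,
      qInt_natCast]
  · intro π _ hπ
    have hdes : desNum m π ≠ 0 := fun h =>
      hπ ((DesSet_eq_empty_iff π).mp (Finset.card_eq_zero.mp h))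
    rw [Polynomial.eval_mul, Polynomial.eval_prod,
      Finset.prod_eq_zero (i := desNum m π) (by simp [desNum_le]; omega) (by simp [qInt]),
      mul_zero]

lemma one_le_mcUp (m : ℕ) (P : PartialOrder (Fin m)) (x : Fin m) : 1 ≤ mcUp m P x :=
  le_csSup ⟨m, fun _ ⟨s, hs, _⟩ => hs ▸ (Finset.card_le_univ s).trans_eq (Fintype.card_fin m)⟩
    ⟨{x}, Finset.card_singleton x, by simp, Finset.mem_singleton_self x, by simp⟩

lemma toLaurent_coeff_ne_zero_iff (p : Polynomial ℤ) (i : ℤ) :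
    (Polynomial.toLaurent p).coeff i ≠ 0 ↔ ∃ n : ℕ, p.coeff n ≠ 0 ∧ (n : ℤ) = i := by
  rw [← Finsupp.mem_support_iff, support_coeff_toLaurent]
  simp

lemma NTL_map_toLaurent (f : Polynomial (Polynomial ℤ)) :
    NTL (f.map Polynomial.toLaurent) = NTP f := by
  simp only [NTL, NTP, Polynomial.coeff_map, toLaurent_coeff_ne_zero_iff]
  congr 1
  ext p
  constructor
  · rintro ⟨_, k, ⟨n, hn, rfl⟩, rfl⟩
    exact ⟨n, k, hn, by simp⟩
  · rintro ⟨n, k, hn, rfl⟩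
    exact ⟨n, k, ⟨n, hn, rfl⟩, by simp⟩

lemma isClosed_NTP (f : Polynomial (Polynomial ℤ)) : IsClosed (NTP f) := by
  refine (Set.Finite.isCompact_convexHull ℝ ?_).isClosed
  refine (f.support.finite_toSet.biUnion fun k _ => (f.coeff k).support.finite_toSet.image
    fun i : ℕ => ((i : ℝ), (k : ℝ))).subset ?_
  rintro _ ⟨i, k, hi, rfl⟩
  exact Set.mem_biUnion (x := k) (by simpa using fun h => hi (by simp [h]))
    ⟨i, by simpa using hi, rfl⟩

lemma mk_mem_convexHull_of_mem {X : Set (ℝ × ℝ)} {x₁ x₂ x y : ℝ}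
    (h₁ : (x₁, y) ∈ convexHull ℝ X) (h₂ : (x₂, y) ∈ convexHull ℝ X) (hx : x ∈ Set.Icc x₁ x₂) :
    (x, y) ∈ convexHull ℝ X :=
  (convex_convexHull ℝ X).segment_subset h₁ h₂ <| by
    rw [← Prod.image_mk_segment_left, segment_eq_Icc (hx.1.trans hx.2)]
    exact ⟨x, hx, rfl⟩

lemma mk_mem_NTP {f : Polynomial (Polynomial ℤ)} {k : ℕ} (hk : f.coeff k ≠ 0) {x : ℝ}
    (hx : x ∈ Set.Icc ((f.coeff k).natTrailingDegree : ℝ) (f.coeff k).natDegree) :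
    (x, (k : ℝ)) ∈ NTP f :=
  mk_mem_convexHull_of_mem
    (subset_convexHull ℝ _ ⟨_, k, mt Polynomial.trailingCoeff_eq_zero.mp hk, rfl⟩)
    (subset_convexHull ℝ _ ⟨_, k, mt Polynomial.leadingCoeff_eq_zero.mp hk, rfl⟩) hx

-- Row `k` of `N φ` is `N_k φ`, whose support runs from the trailing degree of `N_k`
-- (as `φ(0) ≠ 0`) up to `deg N_k + deg φ`.
theorem NTP_mul_C {φ : Polynomial ℤ} (hφ : φ.coeff 0 ≠ 0) (N : Polynomial (Polynomial ℤ)) :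
    NTP (N * Polynomial.C φ) = NTP N + segment ℝ 0 ((φ.natDegree : ℝ), 0) := by
  have hφ' : φ ≠ 0 := fun h => hφ (by simp [h])
  have htrail : φ.natTrailingDegree = 0 :=
    Nat.le_zero.mp (Polynomial.natTrailingDegree_le_of_ne_zero hφ)
  have hrow : ∀ {k}, N.coeff k ≠ 0 → (N * Polynomial.C φ).coeff k ≠ 0 ∧
      ((N * Polynomial.C φ).coeff k).natTrailingDegree = (N.coeff k).natTrailingDegree ∧
      ((N * Polynomial.C φ).coeff k).natDegree = (N.coeff k).natDegree + φ.natDegree := by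
    intro k hk
    rw [Polynomial.coeff_mul_C]
    exact ⟨mul_ne_zero hk hφ', by rw [Polynomial.natTrailingDegree_mul hk hφ', htrail, add_zero],
      Polynomial.natDegree_mul hk hφ'⟩
  rw [← convexHull_pair, NTP, NTP, ← convexHull_add]
  apply Set.Subset.antisymm
  · refine convexHull_min ?_ (convex_convexHull ℝ _)
    rintro _ ⟨n, k, hn, rfl⟩
    have hk : N.coeff k ≠ 0 := fun h => hn (by simp [Polynomial.coeff_mul_C, h])
    obtain ⟨-, ht, hd⟩ := hrow hk
    refine mk_mem_convexHull_of_mem (x₁ := (N.coeff k).natTrailingDegree)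
      (x₂ := (N.coeff k).natDegree + φ.natDegree)
      (subset_convexHull ℝ _
        ⟨_, ⟨_, k, mt Polynomial.trailingCoeff_eq_zero.mp hk, rfl⟩, 0, by simp⟩)
      (subset_convexHull ℝ _ ⟨_, ⟨_, k, mt Polynomial.leadingCoeff_eq_zero.mp hk, rfl⟩, _,
        Set.mem_insert_of_mem _ rfl, by simp⟩) ⟨?_, ?_⟩
    · rw [← ht]
      exact_mod_cast Polynomial.natTrailingDegree_le_of_ne_zero hn
    · rw [← Nat.cast_add, ← hd]
      exact_mod_cast Polynomial.le_natDegree_of_ne_zero hn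
  · refine convexHull_min ?_ (convex_convexHull ℝ _)
    rintro _ ⟨_, ⟨i, k, hi, rfl⟩, v, hv, rfl⟩
    have hk : N.coeff k ≠ 0 := fun h => hi (by simp [h])
    obtain ⟨hk', ht, hd⟩ := hrow hk
    have hlo := Polynomial.natTrailingDegree_le_of_ne_zero hi
    have hhi := Polynomial.le_natDegree_of_ne_zero hi
    rcases hv with rfl | rfl
    · simpa [NTP] using mk_mem_NTP (x := i) hk'
        ⟨by rw [ht]; exact_mod_cast hlo,
          by rw [hd]; exact_mod_cast hhi.trans (Nat.le_add_right _ _)⟩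
    · simpa [NTP] using mk_mem_NTP (x := i + φ.natDegree) hk'
        ⟨by rw [ht]; exact_mod_cast hlo.trans (Nat.le_add_right _ _),
          by rw [hd]; exact_mod_cast Nat.add_le_add_right hhi _⟩

/-- Rådström's cancellation law. For `x ∈ A`, iterating `x + s = b + s'` gives
`n • x + s₀ = b₀ + ⋯ + b_{n-1} + s_n`, so the averages of the `b_k` lie in `B` and tend to `x`. -/
theorem Convex.subset_of_add_subset_add {E : Type*} [NormedAddCommGroup E] [NormedSpace ℝ E]
    {A B S : Set E} (hB : Convex ℝ B) (hBc : IsClosed B) (hS : S.Nonempty)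
    (hSb : Bornology.IsBounded S) (h : A + S ⊆ B + S) : A ⊆ B := by
  obtain ⟨M, hM⟩ := isBounded_iff_forall_norm_le.mp hSb
  obtain ⟨s₀, hs₀⟩ := hS
  intro x hx
  have hstep : ∀ s ∈ S, ∃ b ∈ B, ∃ s' ∈ S, b + s' = x + s := fun s hs =>
    h (Set.add_mem_add hx hs)
  choose! b hb next hnext hbnext using hstep
  set u : ℕ → E := fun n => next^[n] s₀
  have hu : ∀ n, u n ∈ S := fun n => Set.MapsTo.iterate (fun s hs => hnext s hs) n hs₀
  have htele : ∀ n : ℕ, ∑ k ∈ Finset.range n, b (u k) = (n : ℝ) • x + (u 0 - u n) := by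
    intro n
    induction n with
    | zero => simp
    | succ n ih =>
      have hn := hbnext (u n) (hu n)
      rw [Finset.sum_range_succ, ih, Nat.cast_succ, add_smul, one_smul]
      simp only [u, Function.iterate_succ_apply'] at hn ⊢
      rw [← sub_eq_of_eq_add' hn.symm]
      abel
  set c : ℕ → E := fun n => (n : ℝ)⁻¹ • ∑ k ∈ Finset.range n, b (u k)
  have hcB : ∀ n : ℕ, 1 ≤ n → c n ∈ B := fun n hn => by
    simpa only [c, Finset.smul_sum] using
      hB.sum_mem (t := Finset.range n) (w := fun _ => (n : ℝ)⁻¹) (fun _ _ => by positivity)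
        (by simp; field_simp) fun k _ => hb _ (hu k)
  have hcx : ∀ n : ℕ, 1 ≤ n → ‖c n - x‖ ≤ 2 * M / n := by
    intro n hn
    have hn' : (n : ℝ) ≠ 0 := by positivity
    calc ‖c n - x‖ = ‖(n : ℝ)⁻¹ • (u 0 - u n)‖ := by
          simp only [c, htele, smul_add, inv_smul_smul₀ hn', add_sub_cancel_left]
      _ ≤ (n : ℝ)⁻¹ * (M + M) := by
          rw [norm_smul, norm_inv, Real.norm_natCast]
          gcongr
          exact (norm_sub_le _ _).trans (add_le_add (hM _ (hu 0)) (hM _ (hu n)))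
      _ = 2 * M / n := by ring
  have hlim : Filter.Tendsto c Filter.atTop (nhds x) := by
    refine tendsto_iff_norm_sub_tendsto_zero.mpr
      (squeeze_zero' (Filter.Eventually.of_forall fun _ => norm_nonneg _) ?_
        (tendsto_const_div_atTop_nhds_zero_nat (2 * M)))
    filter_upwards [Filter.eventually_ge_atTop 1] with n hn using hcx n hn
  exact hBc.mem_of_tendsto hlim
    (by filter_upwards [Filter.eventually_ge_atTop 1] with n hn using hcB n hn)

theorem Convex.eq_of_add_eq_add {E : Type*} [NormedAddCommGroup E] [NormedSpace ℝ E]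
    {A B S : Set E} (hA : Convex ℝ A) (hAc : IsClosed A) (hB : Convex ℝ B) (hBc : IsClosed B)
    (hS : S.Nonempty) (hSb : Bornology.IsBounded S) (h : A + S = B + S) : A = B :=
  (hB.subset_of_add_subset_add hBc hS hSb h.le).antisymm
    (hA.subset_of_add_subset_add hAc hS hSb h.ge)

lemma segment_zero_mk_zero {r : ℝ} (hr : 0 ≤ r) :
    segment ℝ 0 (r, 0) = (fun t => (t, (0 : ℝ))) '' Set.Icc 0 r := by
  rw [← segment_eq_Icc hr, Prod.image_mk_segment_left]
  rfl

section Cpolygon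

variable {m : ℕ} {a : ℕ → ℕ} {h : ℕ}

lemma sum_Icc_le_sum_Icc {i : ℕ} (hi : i ≤ m) :
    ∑ j ∈ Finset.Icc 1 i, (a j : ℝ) ≤ ∑ j ∈ Finset.Icc 1 m, (a j : ℝ) :=
  Finset.sum_le_sum_of_subset_of_nonneg (Finset.Icc_subset_Icc le_rfl hi) fun _ _ _ => by
    positivity

lemma sum_Icc_add_le_sum_Icc (ha : ∀ j ∈ Finset.Icc 1 m, 1 ≤ a j) {i : ℕ} (hi : i ≤ m) :
    ∑ j ∈ Finset.Icc 1 i, (a j : ℝ) + m ≤ ∑ j ∈ Finset.Icc 1 m, (a j : ℝ) + i := by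
  have hsplit := Finset.sum_Ioc_consecutive (fun j => (a j : ℝ)) (Nat.zero_le i) hi
  have htail := Finset.card_nsmul_le_sum (Finset.Ioc i m) (fun j => (a j : ℝ)) 1 fun j hj => by
    simp only [Finset.mem_Ioc] at hj
    exact_mod_cast ha j (Finset.mem_Icc.mpr ⟨by omega, hj.2⟩)
  simp only [Nat.card_Ioc, nsmul_eq_mul, mul_one, Nat.cast_sub hi] at htail
  rw [← Finset.Icc_add_one_left_eq_Ioc 0 i, ← Finset.Icc_add_one_left_eq_Ioc 0 m, zero_add]
    at hsplit
  linarith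

lemma zero_mem_Cpolygon : ((0 : ℝ), (0 : ℝ)) ∈ Cpolygon m a h :=
  subset_convexHull ℝ _ (by simp)

lemma mk_mem_Cpolygon_top : ((h : ℝ), (m : ℝ)) ∈ Cpolygon m a h :=
  subset_convexHull ℝ _ (by simp)

lemma mk_mem_Cpolygon_base : ((h : ℝ) - m, (0 : ℝ)) ∈ Cpolygon m a h :=
  subset_convexHull ℝ _ (by simp)

lemma mk_sum_mem_Cpolygon {i : ℕ} (hi : i ∈ Finset.Icc 1 m) :
    ((∑ j ∈ Finset.Icc 1 i, (a j : ℝ)), (i : ℝ)) ∈ Cpolygon m a h :=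
  subset_convexHull ℝ _ (Or.inr ⟨i, hi, rfl⟩)

lemma isClosed_Cpolygon (m : ℕ) (a : ℕ → ℕ) (h : ℕ) : IsClosed (Cpolygon m a h) := by
  refine (Set.Finite.isCompact_convexHull ℝ (Set.Finite.union (Set.toFinite _) ?_)).isClosed
  refine ((Finset.Icc 1 m).finite_toSet.image
    fun i => ((∑ j ∈ Finset.Icc 1 i, (a j : ℝ)), (i : ℝ))).subset ?_
  rintro _ ⟨i, hi, rfl⟩
  exact ⟨i, hi, rfl⟩

lemma mk_zero_mem_Cpolygon_of_mem_Icc {x : ℝ} (hx : x ∈ Set.Icc 0 ((h : ℝ) - m)) :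
    (x, (0 : ℝ)) ∈ Cpolygon m a h :=
  mk_mem_convexHull_of_mem zero_mem_Cpolygon mk_mem_Cpolygon_base hx

-- `(h - m + i, i)` lies on the edge from `(h - m, 0)` to `(h, m)`.
lemma mk_mem_Cpolygon_of_mem_Icc {i : ℕ} (hi : i ∈ Finset.Icc 1 m) {x : ℝ}
    (hx : x ∈ Set.Icc (∑ j ∈ Finset.Icc 1 i, (a j : ℝ)) ((h : ℝ) - m + i)) :
    (x, (i : ℝ)) ∈ Cpolygon m a h := by
  obtain ⟨hi1, him⟩ := Finset.mem_Icc.mp hi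
  have hm : (0 : ℝ) < m := by exact_mod_cast (by omega : 0 < m)
  have hedge :
      ((h : ℝ) - m + i, (i : ℝ)) ∈ segment ℝ ((h : ℝ) - m, (0 : ℝ)) ((h : ℝ), (m : ℝ)) := by
    refine ⟨1 - i / m, i / m, sub_nonneg.mpr ((div_le_one hm).mpr (by exact_mod_cast him)),
      by positivity, by ring, ?_⟩
    ext
    · simp; field_simp; ring
    · simp; field_simp
  exact mk_mem_convexHull_of_mem (mk_sum_mem_Cpolygon hi)
    ((convex_convexHull ℝ _).segment_subset mk_mem_Cpolygon_base mk_mem_Cpolygon_top hedge) hx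

lemma Cpolygon_add_segment (hm : 1 ≤ m) (ha : ∀ j ∈ Finset.Icc 1 m, 1 ≤ a j)
    (hs : ∑ j ∈ Finset.Icc 1 m, a j ≤ h) (r : ℕ) :
    Cpolygon m a h + segment ℝ 0 ((r : ℝ), 0) = Cpolygon m a (h + r) := by
  have hs' : ∑ j ∈ Finset.Icc 1 m, (a j : ℝ) ≤ h := by exact_mod_cast hs
  have hrow : ∀ i ≤ m, ∑ j ∈ Finset.Icc 1 i, (a j : ℝ) + m ≤ h + i := fun i hi =>
    (sum_Icc_add_le_sum_Icc ha hi).trans (by linarith)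
  have hmh : (m : ℝ) ≤ h := by simpa using hrow 0 m.zero_le
  have hr : (0 : ℝ) ≤ r := r.cast_nonneg
  have hmem : m ∈ Finset.Icc 1 m := Finset.mem_Icc.mpr ⟨hm, le_rfl⟩
  apply Set.Subset.antisymm
  · rw [Cpolygon, ← convexHull_pair, ← convexHull_add]
    refine convexHull_min ?_ (convex_convexHull ℝ _)
    rintro _ ⟨u, hu, v, hv, rfl⟩
    rcases hv with rfl | rfl <;> rcases hu with ((rfl | rfl | rfl) | ⟨i, hi, rfl⟩)
    · simpa using mk_zero_mem_Cpolygon_of_mem_Icc (a := a) (h := h + r) (x := 0)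
        ⟨le_rfl, by push_cast; linarith⟩
    · simpa using mk_mem_Cpolygon_of_mem_Icc (h := h + r) hmem (x := h)
        ⟨hs', by push_cast; linarith⟩
    · simpa using mk_zero_mem_Cpolygon_of_mem_Icc (a := a) (h := h + r) (x := h - m)
        ⟨by linarith, by push_cast; linarith⟩
    · simpa using mk_mem_Cpolygon_of_mem_Icc (h := h + r) hi (x := _)
        ⟨le_rfl, by push_cast; linarith [hrow i (Finset.mem_Icc.mp hi).2]⟩
    · simpa using mk_zero_mem_Cpolygon_of_mem_Icc (a := a) (h := h + r) (x := r)
        ⟨hr, by push_cast; linarith⟩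
    · simpa using mk_mem_Cpolygon_of_mem_Icc (h := h + r) hmem (x := h + r)
        ⟨by linarith, by push_cast; linarith⟩
    · simpa using mk_zero_mem_Cpolygon_of_mem_Icc (a := a) (h := h + r) (x := h - m + r)
        ⟨by linarith, by push_cast; linarith⟩
    · simpa using mk_mem_Cpolygon_of_mem_Icc (h := h + r) hi (x := _ + r)
        ⟨by linarith, by push_cast; linarith [hrow i (Finset.mem_Icc.mp hi).2]⟩
  · refine convexHull_min ?_ ((convex_convexHull ℝ _).add (convex_segment _ _))
    have hr0 : ((r : ℝ), (0 : ℝ)) ∈ segment ℝ 0 ((r : ℝ), 0) := right_mem_segment ℝ _ _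
    rintro _ ((rfl | rfl | rfl) | ⟨i, hi, rfl⟩)
    · exact ⟨_, zero_mem_Cpolygon, 0, left_mem_segment ℝ _ _, by simp⟩
    · exact ⟨_, mk_mem_Cpolygon_top, _, hr0, by simp⟩
    · exact ⟨_, mk_mem_Cpolygon_base, _, hr0, by simp; ring⟩
    · exact ⟨_, mk_sum_mem_Cpolygon hi, 0, left_mem_segment ℝ _ _, by simp⟩

lemma Cpolygon_subset_halfPlane {α β c : ℝ} (hzero : 0 ≤ c) (htop : α * h + β * m ≤ c)
    (hbase : α * (h - m) ≤ c)
    (hsum : ∀ i ∈ Finset.Icc 1 m, α * ∑ j ∈ Finset.Icc 1 i, (a j : ℝ) + β * i ≤ c) :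
    Cpolygon m a h ⊆ {p | α * p.1 + β * p.2 ≤ c} := by
  have hlin : IsLinearMap ℝ fun p : ℝ × ℝ => α * p.1 + β * p.2 :=
    ⟨fun p q => by simp only [Prod.fst_add, Prod.snd_add]; ring,
      fun t p => by simp only [Prod.smul_fst, Prod.smul_snd, smul_eq_mul]; ring⟩
  refine convexHull_min ?_ (convex_halfSpace_le hlin c)
  rintro _ ((rfl | rfl | rfl) | ⟨i, hi, rfl⟩)
  · simpa using hzero
  · exact htop
  · simpa using hbase
  · exact hsum i hi

lemma mk_mem_Cpolygon_top_iff (hm : 1 ≤ m) (hs : ∑ j ∈ Finset.Icc 1 m, a j ≤ h) {x : ℝ} :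
    (x, (m : ℝ)) ∈ Cpolygon m a h ↔ x ∈ Set.Icc (∑ j ∈ Finset.Icc 1 m, (a j : ℝ)) h := by
  have hs' : ∑ j ∈ Finset.Icc 1 m, (a j : ℝ) ≤ h := by exact_mod_cast hs
  set s := ∑ j ∈ Finset.Icc 1 m, (a j : ℝ)
  have hm' : (1 : ℝ) ≤ m := by exact_mod_cast hm
  have hs0 : 0 ≤ s := by positivity
  refine ⟨fun hx => ⟨?_, ?_⟩, fun hx => mk_mem_Cpolygon_of_mem_Icc
    (Finset.mem_Icc.mpr ⟨hm, le_rfl⟩) (by simpa using hx)⟩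
  · -- the functional `(s + 1) y - x` attains its maximum over `C(a;h)` at `(s, m)`
    have := Cpolygon_subset_halfPlane (α := -1) (β := s + 1) (c := (s + 1) * m - s)
      (by nlinarith) (by linarith) (by nlinarith) (fun i hi => ?_) hx
    · simp only [Set.mem_ofPred_eq] at this
      linarith
    obtain ⟨-, him⟩ := Finset.mem_Icc.mp hi
    rcases him.eq_or_lt with rfl | hlt
    · linarith
    · have : (i : ℝ) + 1 ≤ m := by exact_mod_cast hlt
      have : 0 ≤ ∑ j ∈ Finset.Icc 1 i, (a j : ℝ) := by positivity
      nlinarith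
  · have := Cpolygon_subset_halfPlane (α := 1) (β := 1) (c := h + m) (by positivity)
      (by linarith) (by linarith) (fun i hi => ?_) hx
    · simp only [Set.mem_ofPred_eq] at this
      linarith
    have : (i : ℝ) ≤ m := by exact_mod_cast (Finset.mem_Icc.mp hi).2
    linarith [sum_Icc_le_sum_Icc (a := a) (Finset.mem_Icc.mp hi).2]

lemma eq_of_Cpolygon_eq (hm : 1 ≤ m) {h₁ h₂ : ℕ} (hs₁ : ∑ j ∈ Finset.Icc 1 m, a j ≤ h₁)
    (hs₂ : ∑ j ∈ Finset.Icc 1 m, a j ≤ h₂) (heq : Cpolygon m a h₁ = Cpolygon m a h₂) :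
    h₁ = h₂ := by
  have h₁₂ := ((mk_mem_Cpolygon_top_iff hm hs₂).mp (heq ▸ mk_mem_Cpolygon_top)).2
  have h₂₁ := ((mk_mem_Cpolygon_top_iff hm hs₁).mp (heq.symm ▸ mk_mem_Cpolygon_top)).2
  exact_mod_cast le_antisymm h₁₂ h₂₁

lemma sum_add_le_of_add_segment_eq_Cpolygon (hm : 1 ≤ m) (hs : ∑ j ∈ Finset.Icc 1 m, a j ≤ h)
    {K : Set (ℝ × ℝ)} {r : ℕ} (hK : K + segment ℝ 0 ((r : ℝ), 0) = Cpolygon m a h) :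
    ∑ j ∈ Finset.Icc 1 m, a j + r ≤ h := by
  have hs' : ∑ j ∈ Finset.Icc 1 m, (a j : ℝ) ≤ h := by exact_mod_cast hs
  set s := ∑ j ∈ Finset.Icc 1 m, (a j : ℝ)
  have htop : ∀ x : ℝ, (x, (m : ℝ)) ∈ Cpolygon m a h ↔ x ∈ Set.Icc s h := fun x =>
    mk_mem_Cpolygon_top_iff hm hs
  have hKsub : K ⊆ Cpolygon m a h := fun u hu =>
    hK ▸ ⟨u, hu, 0, left_mem_segment ℝ _ _, add_zero u⟩
  obtain ⟨u, hu, v, hv, hut⟩ : (s, (m : ℝ)) ∈ K + segment ℝ 0 ((r : ℝ), 0) :=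
    hK ▸ (htop s).mpr ⟨le_rfl, hs'⟩
  rw [segment_zero_mk_zero r.cast_nonneg] at hv
  obtain ⟨t, ht, rfl⟩ := hv
  have hu_eq : u = (s - t, (m : ℝ)) := by
    rw [eq_sub_of_add_eq (hut : u + (t, 0) = (s, (m : ℝ)))]
    simp
  -- `(s, m)` is the left end of the top row, so the segment does not move it
  have ht0 : t ≤ 0 := by linarith [((htop _).mp (hu_eq ▸ hKsub hu)).1]
  have hsr : (s + r, (m : ℝ)) ∈ Cpolygon m a h :=
    hK ▸ ⟨u, hu, _, right_mem_segment ℝ _ _, by rw [hu_eq]; ext <;> simp; linarith [ht.1]⟩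
  exact_mod_cast (show ∑ j ∈ Finset.Icc 1 m, (a j : ℝ) + r ≤ h from ((htop _).mp hsr).2)

lemma eq_Cpolygon_sub_of_add_segment_eq (hm : 1 ≤ m) (ha : ∀ j ∈ Finset.Icc 1 m, 1 ≤ a j)
    (hs : ∑ j ∈ Finset.Icc 1 m, a j ≤ h) {K : Set (ℝ × ℝ)} (hKconv : Convex ℝ K)
    (hKclosed : IsClosed K) {r : ℕ} (hK : K + segment ℝ 0 ((r : ℝ), 0) = Cpolygon m a h) :
    K = Cpolygon m a (h - r) := by
  have hle := sum_add_le_of_add_segment_eq_Cpolygon hm hs hK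
  rw [← Nat.sub_add_cancel (le_of_add_le_right hle),
    ← Cpolygon_add_segment hm ha (by omega) r] at hK
  refine hKconv.eq_of_add_eq_add hKclosed (convex_convexHull ℝ _) (isClosed_Cpolygon m a _)
    ⟨0, left_mem_segment ℝ _ _⟩ ?_ hK
  rw [← convexHull_pair]
  exact ((Set.toFinite _).isCompact_convexHull ℝ).isBounded

end Cpolygon

theorem statement4_general (m : ℕ) (hm : 1 ≤ m) (P : PartialOrder (Fin m))
    (hnatdual : NatLabeled m (dualP m P))
    (a : ℕ → ℕ)
    (haperm : (Finset.Icc 1 m).val.map a =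
      (Finset.univ : Finset (Fin m)).val.map (mcUp m P))
    (N : Polynomial (Polynomial ℤ))
    (φ : Polynomial ℤ)
    (hφ : Fpoly m (dualP m P) =
      N.map (Polynomial.toLaurent) * Polynomial.C (Polynomial.toLaurent φ))
    (r : ℕ) (hr : r = φ.natDegree) :
    ((∃ h : ℕ, (∑ i ∈ Finset.Icc 1 m, a i) ≤ h ∧ NTP N = Cpolygon m a h) ↔
      (∃ h' : ℕ, (∑ i ∈ Finset.Icc 1 m, a i) ≤ h' ∧
        NTL (Fpoly m (dualP m P)) = Cpolygon m a h')) ∧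
    (∀ h h' : ℕ, (∑ i ∈ Finset.Icc 1 m, a i) ≤ h → NTP N = Cpolygon m a h →
      (∑ i ∈ Finset.Icc 1 m, a i) ≤ h' → NTL (Fpoly m (dualP m P)) = Cpolygon m a h' →
      h' = h + r) := by
  have ha : ∀ j ∈ Finset.Icc 1 m, 1 ≤ a j := fun j hj => by
    obtain ⟨x, -, hx⟩ := Multiset.mem_map.mp (haperm ▸ Multiset.mem_map_of_mem a hj)
    exact hx ▸ one_le_mcUp m P x
  rw [← Polynomial.map_C, ← Polynomial.map_mul] at hφ
  have hφ0 : φ.coeff 0 ≠ 0 := by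
    have h0 : N.coeff 0 * φ = qFact m := Polynomial.toLaurent_injective <| by
      rw [← Fpoly_coeff_zero hnatdual, hφ, Polynomial.coeff_map, Polynomial.coeff_mul_C]
    intro hc
    simpa [hc, qFact_coeff_zero] using congrArg (Polynomial.coeff · 0) h0
  have hNT : NTL (Fpoly m (dualP m P)) = NTP N + segment ℝ 0 ((r : ℝ), 0) := by
    rw [hφ, NTL_map_toLaurent, NTP_mul_C hφ0, hr]
  refine ⟨⟨fun ⟨h, hs, hN⟩ => ⟨h + r, by omega, ?_⟩, fun ⟨h', hs', hF⟩ => ⟨h' - r, ?_, ?_⟩⟩, ?_⟩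
  · rw [hNT, hN, Cpolygon_add_segment hm ha hs]
  · have := sum_add_le_of_add_segment_eq_Cpolygon hm hs' (hNT ▸ hF)
    omega
  · exact eq_Cpolygon_sub_of_add_segment_eq hm ha hs' (convex_convexHull ℝ _) (isClosed_NTP N)
      (hNT ▸ hF)
  · intro h h' hs hN hs' hF
    rw [hNT, hN, Cpolygon_add_segment hm ha hs] at hF
    exact (eq_of_Cpolygon_eq hm (by omega) hs' hF).symm

theorem statement4 (m : ℕ) (hm : 1 ≤ m) (P : PartialOrder (Fin m))
    (hnatdual : NatLabeled m (dualP m P))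
    (a : ℕ → ℕ)
    (hamono : ∀ i ∈ Finset.Icc 1 m, ∀ j ∈ Finset.Icc 1 m, i ≤ j → a i ≤ a j)
    (haperm : (Finset.Icc 1 m).val.map a =
      (Finset.univ : Finset (Fin m)).val.map (mcUp m P))
    (E : Polynomial (RatFunc ℚ))
    (hE : ∀ n : ℕ, E.eval (toRF (qIntP n)) = toRF (Wpoly m P n))
    (N : Polynomial (Polynomial ℤ)) (D : Polynomial ℤ) (hD : D ≠ 0)
    (hlead : 0 < N.leadingCoeff.leadingCoeff)
    (hND : N.map toRF = Polynomial.C (toRF D) * E)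
    (hgcd : IsRelPrime N (Polynomial.C D))
    (φ : Polynomial ℤ)
    (hφ : Fpoly m (dualP m P) =
      N.map (Polynomial.toLaurent) * Polynomial.C (Polynomial.toLaurent φ))
    (r : ℕ) (hr : r = φ.natDegree) :
    ((∃ h : ℕ, (∑ i ∈ Finset.Icc 1 m, a i) ≤ h ∧ NTP N = Cpolygon m a h) ↔
      (∃ h' : ℕ, (∑ i ∈ Finset.Icc 1 m, a i) ≤ h' ∧
        NTL (Fpoly m (dualP m P)) = Cpolygon m a h')) ∧
    (∀ h h' : ℕ, (∑ i ∈ Finset.Icc 1 m, a i) ≤ h → NTP N = Cpolygon m a h →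
      (∑ i ∈ Finset.Icc 1 m, a i) ≤ h' → NTL (Fpoly m (dualP m P)) = Cpolygon m a h' →
      h' = h + r) :=
  statement4_general m hm P hnatdual a haperm N φ hφ r hr
end

section
/- Let P be a naturally labeled partial order on {1,2,…,m} and let π ∈ L(P) with Des(π) ≠ ∅. Let c be the largest descent of π. Then there exists a permutation σ ∈ L(P) such that Des(σ) = Des(π) \ {c}. -/
open Finset Polynomial LaurentPolynomial

attribute [local instance] Classical.propDecidable

/-!
Let `d` be the largest descent of `π` other than `c`, or `0` if there is none. Keep
`π_1 ⋯ π_d` and rewrite the remaining entries in increasing order. Since `π` is a linear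
extension, no later entry lies `≤_P` below one of the first `d`, and on the increasing tail the
natural labeling does the rest. The descents before `d` are untouched, `d` stays a descent
because the new `π_{d+1}` is the smallest entry of the old tail, and the tail has no descents.
-/

theorem Finset.sup_id_mem_or_eq_zero (t : Finset ℕ) : t.sup id ∈ t ∨ t.sup id = 0 := by
  rcases t.eq_empty_or_nonempty with rfl | ht
  · exact Or.inr Finset.sup_empty
  · obtain ⟨i, hi, hsup⟩ := Finset.exists_mem_eq_sup t ht id
    exact Or.inl (hsup ▸ hi)

theorem Finset.filter_le_sup_erase_eq {s : Finset ℕ} {c : ℕ} (hc : IsGreatest (s : Set ℕ) c)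
    (h0 : 0 ∉ s) : s.filter (· ≤ (s.erase c).sup id) = s.erase c := by
  have hc0 : 0 < c := Nat.pos_of_ne_zero fun h => h0 (h ▸ hc.1)
  have hlt : (s.erase c).sup id < c := (Finset.sup_lt_iff hc0).mpr fun b hb =>
    lt_of_le_of_ne (hc.2 (Finset.mem_of_mem_erase hb)) (Finset.ne_of_mem_erase hb)
  ext j
  simp only [Finset.mem_filter, Finset.mem_erase]
  constructor
  · rintro ⟨hj, hjd⟩
    exact ⟨by omega, hj⟩
  · rintro ⟨hjc, hj⟩
    exact ⟨hj, Finset.le_sup (f := id) (Finset.mem_erase.mpr ⟨hjc, hj⟩)⟩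

def OrderIso.ofCardEq (α β : Type*) [LinearOrder α] [LinearOrder β] [Fintype α] [Fintype β]
    (h : Fintype.card α = Fintype.card β) : α ≃o β :=
  (Fintype.orderIsoFinOfCardEq α rfl).symm.trans (Fintype.orderIsoFinOfCardEq β h.symm)

section

variable {m : ℕ}

-- Descents are 1-based positions `j`, comparing the 0-based entries `j - 1` and `j`.
theorem mem_desSet_iff (π : Equiv.Perm (Fin m)) (j : ℕ) :
    j ∈ DesSet m π ↔
      ∃ (hj : 1 ≤ j) (hjm : j < m), π ⟨j, hjm⟩ < π ⟨j - 1, by omega⟩ := by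
  rw [DesSet, Finset.mem_filter, Finset.mem_Ico]
  unfold wordAt
  constructor
  · rintro ⟨⟨hj, hjm⟩, h⟩
    refine ⟨hj, hjm, ?_⟩
    rw [dif_pos (by omega), dif_pos (by omega)] at h
    exact Fin.lt_def.mpr (by simpa using h)
  · rintro ⟨hj, hjm, h⟩
    refine ⟨⟨hj, hjm⟩, ?_⟩
    rw [dif_pos (by omega), dif_pos (by omega)]
    simpa using Fin.lt_def.mp h

theorem zero_notMem_desSet (π : Equiv.Perm (Fin m)) : 0 ∉ DesSet m π := fun h => by
  obtain ⟨h0, -⟩ := (mem_desSet_iff π 0).mp h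
  omega

def sortFromTail (π : Equiv.Perm (Fin m)) (d : ℕ) :
    {i : Fin m // ¬ (i : ℕ) < d} ≃o {x : Fin m // ¬ (π.symm x : ℕ) < d} :=
  OrderIso.ofCardEq _ _ (Fintype.card_congr (π.subtypeEquiv fun i => by simp))

/-- `sortFrom π d` agrees with `π` at the (0-based) positions `< d` and lists the remaining
values of `π` in increasing order. -/
def sortFrom (π : Equiv.Perm (Fin m)) (d : ℕ) : Equiv.Perm (Fin m) :=
  Equiv.subtypeCongr (π.subtypeEquiv fun i => by simp) (sortFromTail π d).toEquiv

section sortFrom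

variable (π : Equiv.Perm (Fin m)) {d : ℕ} {i j : Fin m}

theorem sortFrom_apply_of_lt (hi : (i : ℕ) < d) : sortFrom π d i = π i := by
  simp [sortFrom, Equiv.subtypeCongr, Equiv.sumCompl, hi]

theorem sortFrom_apply_of_le (hi : d ≤ (i : ℕ)) :
    sortFrom π d i = sortFromTail π d ⟨i, not_lt.mpr hi⟩ := by
  simp [sortFrom, Equiv.subtypeCongr, Equiv.sumCompl, not_lt.mpr hi]

theorem sortFrom_le_sortFrom_iff (hi : d ≤ (i : ℕ)) (hj : d ≤ (j : ℕ)) :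
    sortFrom π d i ≤ sortFrom π d j ↔ i ≤ j := by
  rw [sortFrom_apply_of_le π hi, sortFrom_apply_of_le π hj, Subtype.coe_le_coe,
    OrderIso.le_iff_le, Subtype.mk_le_mk]

theorem le_symm_sortFrom (hi : d ≤ (i : ℕ)) : d ≤ (π.symm (sortFrom π d i) : ℕ) := by
  rw [sortFrom_apply_of_le π hi]
  exact not_lt.mp (sortFromTail π d _).property

theorem sortFrom_le_apply (hd : d < m) (hi : d ≤ (i : ℕ)) :
    sortFrom π d ⟨d, hd⟩ ≤ π i := by
  set y := (sortFromTail π d).symm ⟨π i, by simpa using hi⟩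
  have hy : d ≤ (y : Fin m) := not_lt.mp y.property
  have hπi : sortFrom π d y = π i := by
    rw [sortFrom_apply_of_le π hy, Subtype.coe_eta, OrderIso.apply_symm_apply]
  rw [← hπi, sortFrom_le_sortFrom_iff π (i := ⟨d, hd⟩) le_rfl hy]
  exact Fin.le_def.mpr hy

end sortFrom

theorem isLinExt_sortFrom {P : PartialOrder (Fin m)} (hnat : NatLabeled m P)
    {π : Equiv.Perm (Fin m)} (hπ : IsLinExt m P π) (d : ℕ) : IsLinExt m P (sortFrom π d) := by
  intro i j hij
  rcases lt_or_ge (i : ℕ) d with hi | hi <;> rcases lt_or_ge (j : ℕ) d with hj | hj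
  · rw [sortFrom_apply_of_lt π hi, sortFrom_apply_of_lt π hj] at hij
    exact hπ i j hij
  · exact Fin.le_def.mpr (by omega)
  · rw [← π.apply_symm_apply (sortFrom π d i), sortFrom_apply_of_lt π hj] at hij
    have := le_symm_sortFrom π hi
    have := Fin.le_def.mp (hπ _ _ hij)
    omega
  · exact (sortFrom_le_sortFrom_iff π hi hj).mp (hnat _ _ hij)

theorem desSet_sortFrom (π : Equiv.Perm (Fin m)) {d : ℕ} (hd : d ∈ DesSet m π ∨ d = 0) :
    DesSet m (sortFrom π d) = (DesSet m π).filter (· ≤ d) := by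
  ext j
  rw [Finset.mem_filter, mem_desSet_iff, mem_desSet_iff]
  constructor
  · rintro ⟨hj, hjm, hdes⟩
    rcases lt_trichotomy j d with hjd | rfl | hjd
    · rw [sortFrom_apply_of_lt π hjd, sortFrom_apply_of_lt π (by dsimp only; omega)] at hdes
      exact ⟨⟨hj, hjm, hdes⟩, hjd.le⟩
    · exact ⟨(mem_desSet_iff π j).mp (hd.resolve_right (by omega)), le_rfl⟩
    · exact absurd ((sortFrom_le_sortFrom_iff π (by dsimp only; omega) (by dsimp only; omega)).mpr
        (Fin.le_def.mpr (by simp))) (not_le.mpr hdes)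
  · rintro ⟨⟨hj, hjm, hdes⟩, hjd⟩
    refine ⟨hj, hjm, ?_⟩
    rw [sortFrom_apply_of_lt π (i := ⟨j - 1, _⟩) (by dsimp only; omega)]
    rcases hjd.lt_or_eq with hjd | rfl
    · rwa [sortFrom_apply_of_lt π hjd]
    · exact (sortFrom_le_apply π hjm le_rfl).trans_lt hdes

end

theorem statement5_general (m : ℕ) (P : PartialOrder (Fin m))
    (hnat : NatLabeled m P)
    (π : Equiv.Perm (Fin m)) (hπ : IsLinExt m P π)
    (c : ℕ) (hc : IsGreatest (↑(DesSet m π) : Set ℕ) c) :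
    ∃ σ : Equiv.Perm (Fin m), IsLinExt m P σ ∧ DesSet m σ = (DesSet m π).erase c := by
  set d := ((DesSet m π).erase c).sup id
  have hd : d ∈ DesSet m π ∨ d = 0 :=
    (Finset.sup_id_mem_or_eq_zero _).imp_left Finset.mem_of_mem_erase
  refine ⟨sortFrom π d, isLinExt_sortFrom hnat hπ d, ?_⟩
  rw [desSet_sortFrom π hd, Finset.filter_le_sup_erase_eq hc (zero_notMem_desSet π)]

theorem statement5 (m : ℕ) (hm : 1 ≤ m) (P : PartialOrder (Fin m))
    (hnat : NatLabeled m P)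
    (π : Equiv.Perm (Fin m)) (hπ : IsLinExt m P π)
    (hne : (DesSet m π).Nonempty)
    (c : ℕ) (hc : IsGreatest (↑(DesSet m π) : Set ℕ) c) :
    ∃ σ : Equiv.Perm (Fin m), IsLinExt m P σ ∧ DesSet m σ = (DesSet m π).erase c :=
  statement5_general m P hnat π hπ c hc
end

section
/- Fix integers p ≥ 1, r ≥ 1, k ≥ 0, m ≥ 1 and mutually disjoint subsets C_1,…,C_p of {1,2,…,m} with |C_1|+⋯+|C_{p−1}| ≤ k < |C_1|+⋯+|C_p|, and set u = |C_1|+⋯+|C_p| − k. Let B_1,…,B_r be mutually disjoint subsets of {1,2,…,k} such that B_i ⊆ C_1 ∪ ⋯ ∪ C_{min(i,p)} for all 1 ≤ i ≤ r and B_1 ∪ ⋯ ∪ B_r = {1,2,…,k}. Then |B_1| + 2|B_2| + ⋯ + r|B_r| ≥ |C_1| + 2|C_2| + ⋯ + (p−1)|C_{p−1}| + p(|C_p| − u). -/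
open Finset Polynomial LaurentPolynomial

attribute [local instance] Classical.propDecidable

/-! The blocks `B_i` with `i < t` lie in `C_1 ∪ ⋯ ∪ C_{t-1}`, so at least `k - (|C_1| + ⋯ + |C_{t-1}|)`
elements of `{1, …, k}` lie in blocks `B_i` with `i ≥ t`. Summing this over `t = 1, …, p`, the
right-hand sides add up to at most `∑ i |B_i|` (the block `B_i` is counted for `t ≤ i` only), while
the left-hand sides add up, by Abel summation, to `∑_{i < p} i |C_i| + p (k - ∑_{i < p} |C_i|)`,
and `|C_p| - u ≤ k - ∑_{i < p} |C_i|`. -/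

section DescentBlocks

variable {α : Type*} [DecidableEq α]

theorem sum_card_filter_lt_le_sum_card {s : Finset ℕ} {B C : ℕ → Finset α}
    (hB : (s : Set ℕ).PairwiseDisjoint B) (hBC : ∀ i ∈ s, B i ⊆ (Icc 1 i).biUnion C) (t : ℕ) :
    ∑ i ∈ s with i < t, (B i).card ≤ ∑ j ∈ Icc 1 (t - 1), (C j).card := by
  rw [← card_biUnion (hB.subset (coe_subset.mpr (filter_subset _ s)))]
  refine (card_le_card ?_).trans card_biUnion_le
  intro x hx
  obtain ⟨i, hi, hxi⟩ := mem_biUnion.mp hx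
  obtain ⟨his, hit⟩ := mem_filter.mp hi
  obtain ⟨j, hj, hxj⟩ := mem_biUnion.mp (hBC i his hxi)
  exact mem_biUnion.mpr ⟨j, mem_Icc.mpr ⟨(mem_Icc.mp hj).1, by grind⟩, hxj⟩

theorem sum_card_le_add_sum_card_filter_le {s : Finset ℕ} {B C : ℕ → Finset α}
    (hB : (s : Set ℕ).PairwiseDisjoint B) (hBC : ∀ i ∈ s, B i ⊆ (Icc 1 i).biUnion C) (t : ℕ) :
    ∑ i ∈ s, (B i).card ≤ ∑ j ∈ Icc 1 (t - 1), (C j).card + ∑ i ∈ s with t ≤ i, (B i).card := by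
  rw [← sum_filter_add_sum_filter_not s (· < t)]
  simp only [not_lt]
  gcongr
  exact sum_card_filter_lt_le_sum_card hB hBC t

end DescentBlocks

theorem sum_Icc_sum_filter_le_le_sum_mul (p : ℕ) (s : Finset ℕ) (f : ℕ → ℕ) :
    ∑ t ∈ Icc 1 p, ∑ i ∈ s with t ≤ i, f i ≤ ∑ i ∈ s, i * f i := by
  rw [sum_comm' (t' := s) (s' := fun i => (Icc 1 p).filter (· ≤ i)) (by simp only [mem_filter, mem_Icc]; tauto)]
  refine sum_le_sum fun i _ => ?_
  rw [sum_const, smul_eq_mul]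
  gcongr
  calc #((Icc 1 p).filter (· ≤ i)) ≤ #(Icc 1 i) :=
        card_le_card fun t ht => by simp only [mem_filter, mem_Icc] at ht ⊢; omega
    _ = i := by simp

theorem sum_Icc_sum_Icc_add_sum_mul (c : ℕ → ℕ) (n : ℕ) :
    ∑ t ∈ Icc 1 (n + 1), ∑ i ∈ Icc 1 (t - 1), c i + ∑ i ∈ Icc 1 n, i * c i =
      (n + 1) * ∑ i ∈ Icc 1 n, c i := by
  induction n with
  | zero => simp
  | succ n ih =>
    rw [sum_Icc_succ_top (by omega), sum_Icc_succ_top (by omega) (fun i => i * c i),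
      Nat.add_sub_cancel, sum_Icc_succ_top (by omega) c]
    linear_combination ih

theorem statement6_general (p r k : ℕ)
    (C : ℕ → Finset ℕ)
    (hk1 : ∑ i ∈ Finset.Icc 1 (p - 1), (C i).card ≤ k)
    (u : ℕ) (hu : u = (∑ i ∈ Finset.Icc 1 p, (C i).card) - k)
    (B : ℕ → Finset ℕ)
    (hBdisj : ∀ i ∈ Finset.Icc 1 r, ∀ j ∈ Finset.Icc 1 r, i ≠ j → Disjoint (B i) (B j))
    (hBC : ∀ i ∈ Finset.Icc 1 r, B i ⊆ (Finset.Icc 1 (min i p)).biUnion C)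
    (hcover : (Finset.Icc 1 r).biUnion B = Finset.Icc 1 k) :
    (∑ i ∈ Finset.Icc 1 (p - 1), i * (C i).card) + p * ((C p).card - u) ≤
      ∑ i ∈ Finset.Icc 1 r, i * (B i).card := by
  rcases p with _ | n
  · simp
  rw [Nat.add_sub_cancel] at hk1 ⊢
  rw [sum_Icc_succ_top (by omega)] at hu
  have hBtot : ∑ i ∈ Icc 1 r, (B i).card = k := by
    rw [← card_biUnion hBdisj, hcover, Nat.card_Icc, Nat.add_sub_cancel]
  have hBC' : ∀ i ∈ Icc 1 r, B i ⊆ (Icc 1 i).biUnion C := fun i hi =>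
    (hBC i hi).trans <|
      biUnion_subset_biUnion_of_subset_left C (Icc_subset_Icc_right (min_le_left i _))
  have htail : (n + 1) * k ≤ ∑ t ∈ Icc 1 (n + 1), ∑ j ∈ Icc 1 (t - 1), (C j).card +
      ∑ t ∈ Icc 1 (n + 1), ∑ i ∈ Icc 1 r with t ≤ i, (B i).card := by
    simpa [← sum_add_distrib, hBtot] using
      sum_le_sum fun t (_ : t ∈ Icc 1 (n + 1)) => sum_card_le_add_sum_card_filter_le hBdisj hBC' t
  have habel := sum_Icc_sum_Icc_add_sum_mul (fun i => (C i).card) n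
  have hcount := sum_Icc_sum_filter_le_le_sum_mul (n + 1) (Icc 1 r) fun i => (B i).card
  have hlast : (C (n + 1)).card - u + ∑ i ∈ Icc 1 n, (C i).card ≤ k := by omega
  linarith [Nat.mul_le_mul_left (n + 1) hlast]

theorem statement6 (p r k m : ℕ) (hp : 1 ≤ p) (hr : 1 ≤ r) (hm : 1 ≤ m)
    (C : ℕ → Finset ℕ)
    (hCsub : ∀ i ∈ Finset.Icc 1 p, C i ⊆ Finset.Icc 1 m)
    (hCdisj : ∀ i ∈ Finset.Icc 1 p, ∀ j ∈ Finset.Icc 1 p, i ≠ j → Disjoint (C i) (C j))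
    (hk1 : ∑ i ∈ Finset.Icc 1 (p - 1), (C i).card ≤ k)
    (hk2 : k < ∑ i ∈ Finset.Icc 1 p, (C i).card)
    (u : ℕ) (hu : u = (∑ i ∈ Finset.Icc 1 p, (C i).card) - k)
    (B : ℕ → Finset ℕ)
    (hBsub : ∀ i ∈ Finset.Icc 1 r, B i ⊆ Finset.Icc 1 k)
    (hBdisj : ∀ i ∈ Finset.Icc 1 r, ∀ j ∈ Finset.Icc 1 r, i ≠ j → Disjoint (B i) (B j))
    (hBC : ∀ i ∈ Finset.Icc 1 r, B i ⊆ (Finset.Icc 1 (min i p)).biUnion C)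
    (hcover : (Finset.Icc 1 r).biUnion B = Finset.Icc 1 k) :
    (∑ i ∈ Finset.Icc 1 (p - 1), i * (C i).card) + p * ((C p).card - u) ≤
      ∑ i ∈ Finset.Icc 1 r, i * (B i).card :=
  statement6_general p r k C hk1 u hu B hBdisj hBC hcover
end

section
/- Let π be a permutation of {1,…,m} with des(π) = s ≥ 1, and let k be an integer with s ≤ k ≤ m. Then t(π,k) is a nonzero polynomial in q and q_min(t(π,k)) = maj(π) − k·s + k(k+1)/2. -/
open Finset Polynomial LaurentPolynomial

attribute [local instance] Classical.propDecidable

/-!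
Write `A_n = ∏_{i=1}^n (q^i x + [i]_q)`, so that `t(π,k)` is `q^{maj π - s(s-1)/2}` times the
`x^{k-1}`-coefficient of `(∏_{i=1}^{s-1} (x - [i]_q)) · A_{m-s}`. The `x^r`-coefficient of `A_n`
(`r ≤ n`) has `q`-order `r(r+1)/2` with lowest coefficient `1`: only the choice of `q^i x` for
`i = 1, …, r` reaches that power. The first factor is monic of degree `s - 1` with coefficients in
`ℤ[q]`, so in the `x^{k-1}`-coefficient of the product only its leading coefficient times the
`x^{k-s}`-coefficient of `A_{m-s}` reaches `q^{(k-s)(k-s+1)/2}`; every other term starts strictly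
higher. Adding exponents, `maj π - s(s-1)/2 + (k-s)(k-s+1)/2 = maj π - ks + k(k+1)/2`.
-/

namespace LaurentPolynomial

variable {R : Type*} [Semiring R]

def VanishesBelow (f : R[T;T⁻¹]) (a : ℤ) : Prop := ∀ i < a, f.coeff i = 0

lemma coeff_T_mul (n : ℤ) (f : R[T;T⁻¹]) (i : ℤ) : (T n * f).coeff i = f.coeff (i - n) := by
  rw [T, AddMonoidAlgebra.coeff_single_mul_apply, one_mul, neg_add_eq_sub]

lemma vanishesBelow_zero (a : ℤ) : (0 : R[T;T⁻¹]).VanishesBelow a := fun _ _ => rfl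

namespace VanishesBelow

variable {f g : R[T;T⁻¹]} {a b : ℤ}

lemma mono (hf : f.VanishesBelow a) (hba : b ≤ a) : f.VanishesBelow b :=
  fun i hi => hf i (hi.trans_le hba)

lemma add (hf : f.VanishesBelow a) (hg : g.VanishesBelow a) : (f + g).VanishesBelow a :=
  fun i hi => by rw [AddMonoidAlgebra.coeff_add, Finsupp.add_apply, hf i hi, hg i hi, add_zero]

lemma sum {ι : Type*} {s : Finset ι} {F : ι → R[T;T⁻¹]}
    (h : ∀ j ∈ s, (F j).VanishesBelow a) :
    (∑ j ∈ s, F j).VanishesBelow a :=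
  fun i hi => by
    rw [AddMonoidAlgebra.coeff_sum, Finsupp.finsetSum_apply]
    exact Finset.sum_eq_zero fun j hj => h j hj i hi

lemma le_of_mem_support (hf : f.VanishesBelow a) {i : ℤ} (hi : i ∈ f.coeff.support) : a ≤ i :=
  not_lt.1 fun h => Finsupp.mem_support_iff.1 hi (hf i h)

lemma mul (hf : f.VanishesBelow a) (hg : g.VanishesBelow b) : (f * g).VanishesBelow (a + b) :=
  fun i hi => by
    rw [AddMonoidAlgebra.coeff_mul_apply_left]
    exact Finset.sum_eq_zero fun j hj => by
      simp only [hg (-j + i) (by linarith [hf.le_of_mem_support hj]), mul_zero]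

lemma coeff_mul_add (hf : f.VanishesBelow a) (hg : g.VanishesBelow b) :
    (f * g).coeff (a + b) = f.coeff a * g.coeff b := by
  rw [AddMonoidAlgebra.coeff_mul_apply_left, Finsupp.sum]
  refine (Finset.sum_eq_single a (fun j hj hja => ?_) (fun ha => ?_)).trans
    (by rw [neg_add_cancel_left])
  · rw [hg _ (by linarith [(hf.le_of_mem_support hj).lt_of_ne' hja]), mul_zero]
  · rw [Finsupp.notMem_support_iff.1 ha, zero_mul]

lemma T_mul (hf : f.VanishesBelow a) (n : ℤ) : (T n * f).VanishesBelow (n + a) :=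
  fun i hi => by rw [coeff_T_mul, hf _ (by omega)]

lemma isLeast (hf : f.VanishesBelow a) (ha : f.coeff a ≠ 0) :
    IsLeast {i | f.coeff i ≠ 0} a :=
  ⟨ha, fun _ hi => not_lt.1 fun h => hi (hf _ h)⟩

end VanishesBelow

end LaurentPolynomial

namespace Polynomial

variable {R : Type*} [Semiring R]

lemma coeff_toLaurent_natCast (p : R[X]) (n : ℕ) : (toLaurent p).coeff n = p.coeff n := by
  rw [coeff_toLaurent, ← Nat.castEmbedding_apply (R := ℤ),
    Finsupp.mapDomain_apply Nat.castEmbedding.injective]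
  rfl

lemma vanishesBelow_toLaurent (p : R[X]) : (toLaurent p).VanishesBelow 0 := fun i hi => by
  rw [coeff_toLaurent]
  exact Finsupp.mapDomain_of_notMem_range _ _ fun ⟨n, hn⟩ => by
    have : (0 : ℤ) ≤ i := hn ▸ Int.natCast_nonneg n
    omega

end Polynomial

lemma qInt_natCast_s15 (n : ℕ) : qInt n = toLaurent (qIntP n) := by
  simp [qInt, qIntP, map_sum, Polynomial.toLaurent_X_pow]

lemma coeff_qIntP_zero {n : ℕ} (hn : n ≠ 0) : (qIntP n).coeff 0 = 1 := by
  simp [qIntP, Polynomial.coeff_X_pow, Nat.pos_of_ne_zero hn]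

lemma vanishesBelow_qInt (n : ℕ) : (qInt n).VanishesBelow 0 := by
  rw [qInt_natCast_s15]; exact vanishesBelow_toLaurent _

lemma coeff_qInt_zero {n : ℕ} (hn : n ≠ 0) : (qInt n).coeff 0 = 1 := by
  rw [qInt_natCast_s15, ← Nat.cast_zero, coeff_toLaurent_natCast, coeff_qIntP_zero hn]

lemma Nat.succ_choose_two (n : ℕ) : (n + 1).choose 2 = n.choose 2 + n := by
  rw [Nat.choose_succ_succ', Nat.choose_one_right, add_comm]

lemma Nat.succ_choose_two_add_choose_two {s k : ℕ} (h : s ≤ k) :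
    (k + 1).choose 2 + s.choose 2 = (k - s + 1).choose 2 + k * s := by
  obtain ⟨d, rfl⟩ := Nat.exists_eq_add_of_le h
  rw [Nat.add_sub_cancel_left]
  have : (((s + d + 1).choose 2 + s.choose 2 : ℕ) : ℚ) =
      ((d + 1).choose 2 + (s + d) * s : ℕ) := by
    push_cast [Nat.cast_choose_two]
    ring
  exact_mod_cast this

lemma Int.natCast_succ_choose_two (k : ℕ) :
    (((k + 1).choose 2 : ℕ) : ℤ) = k * (k + 1) / 2 := by
  rw [Nat.choose_two_right, Nat.add_sub_cancel, mul_comm]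
  push_cast
  rfl

lemma Apoly_succ (n : ℕ) :
    Apoly (n + 1) = Polynomial.C (T (n + 1)) * (X * Apoly n) +
      Polynomial.C (qInt (n + 1 : ℕ)) * Apoly n := by
  rw [Apoly, Apoly, Finset.prod_Icc_succ_top (by omega)]
  push_cast
  ring

lemma natDegree_Apoly_le (n : ℕ) : (Apoly n).natDegree ≤ n :=
  (natDegree_prod_le _ _).trans <|
    (Finset.sum_le_card_nsmul _ _ 1 fun _ _ => natDegree_linear_le).trans (by simp)

lemma coeff_Apoly (n : ℕ) {r : ℕ} (hr : r ≤ n) :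
    ((Apoly n).coeff r).VanishesBelow ((r + 1).choose 2) ∧
      ((Apoly n).coeff r).coeff ((r + 1).choose 2) = 1 := by
  induction n generalizing r with
  | zero =>
    obtain rfl : r = 0 := by omega
    simpa [Apoly] using
      And.intro (vanishesBelow_toLaurent (1 : ℤ[X])) (coeff_toLaurent_natCast (1 : ℤ[X]) 0)
  | succ n ih =>
    have hq := vanishesBelow_qInt (n + 1)
    rw [Apoly_succ, coeff_add, coeff_C_mul, coeff_C_mul]
    rcases r with _ | j
    · obtain ⟨hA, hA1⟩ := ih (Nat.zero_le n)
      have h0 : (0 + 1).choose 2 = 0 := rfl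
      rw [h0, Nat.cast_zero] at hA hA1 ⊢
      have hqA := hq.coeff_mul_add hA
      rw [add_zero] at hqA
      rw [coeff_X_mul_zero, mul_zero, zero_add, hqA, coeff_qInt_zero (by omega), hA1, one_mul]
      simpa using hq.mul hA
    · have hE := Nat.succ_choose_two (j + 1)
      rw [coeff_X_mul]
      obtain ⟨hA, hA1⟩ := ih (show j ≤ n by omega)
      have hT := hA.T_mul (n + 1)
      -- For `j < n` the term `q^{n+1} [x^j] A_n` starts strictly above `q^{(j+2 choose 2)}`;
      -- for `j = n` it is the only contribution, as `[x^{n+1}] A_n = 0`.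
      rcases (show j < n ∨ j = n by omega) with hjn | rfl
      · obtain ⟨hB, hB1⟩ := ih (show j + 1 ≤ n by omega)
        have hqB := hq.coeff_mul_add hB
        rw [zero_add] at hqB
        refine ⟨(hT.mono ?_).add (by simpa using hq.mul hB), ?_⟩
        · omega
        · rw [AddMonoidAlgebra.coeff_add, Finsupp.add_apply, hT _ (by omega), zero_add, hqB,
            coeff_qInt_zero (by omega), one_mul, hB1]
      · rw [coeff_eq_zero_of_natDegree_lt (n := j + 1)
          ((natDegree_Apoly_le j).trans_lt (by omega)), mul_zero, add_zero]
        refine ⟨hT.mono (by omega), ?_⟩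
        rw [coeff_T_mul]
        convert hA1 using 2
        omega

noncomputable def qFallingProd (t : ℕ) : (LaurentPolynomial ℤ)[X] :=
  ∏ i ∈ Finset.Icc 1 t, (X - Polynomial.C (qInt i))

lemma monic_qFallingProd (t : ℕ) : (qFallingProd t).Monic :=
  monic_prod_of_monic _ _ fun _ _ => monic_X_sub_C _

lemma natDegree_qFallingProd (t : ℕ) : (qFallingProd t).natDegree = t := by
  rw [qFallingProd, natDegree_prod_of_monic _ _ fun _ _ => monic_X_sub_C _]
  simp

lemma vanishesBelow_coeff_qFallingProd (t j : ℕ) :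
    ((qFallingProd t).coeff j).VanishesBelow 0 := by
  have : qFallingProd t =
      (∏ i ∈ Finset.Icc 1 t, (X - Polynomial.C (qIntP i))).map toLaurent := by
    simp [qFallingProd, Polynomial.map_prod, qInt_natCast_s15]
  rw [this, coeff_map]
  exact vanishesBelow_toLaurent _

lemma coeff_qFallingProd_mul_Apoly (t : ℕ) {n b : ℕ} (hb : b ≤ n) :
    ((qFallingProd t * Apoly n).coeff (t + b)).VanishesBelow ((b + 1).choose 2) ∧
      ((qFallingProd t * Apoly n).coeff (t + b)).coeff ((b + 1).choose 2) = 1 := by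
  have hrest : (∑ x ∈ (antidiagonal (t + b)).erase (t, b),
      (qFallingProd t).coeff x.1 * (Apoly n).coeff x.2).VanishesBelow ((b + 1).choose 2 + 1) := by
    refine VanishesBelow.sum fun ⟨a, c⟩ hx => ?_
    obtain ⟨hne, hac⟩ := Finset.mem_erase.1 hx
    rw [HasAntidiagonal.mem_antidiagonal] at hac
    rcases lt_or_ge t a with hta | hat
    · rw [coeff_eq_zero_of_natDegree_lt (by rwa [natDegree_qFallingProd]), zero_mul]
      exact vanishesBelow_zero _
    have hbc : b + 1 ≤ c := by
      have : a ≠ t := fun h => hne (by simp only [h, Prod.mk.injEq, true_and]; omega)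
      omega
    have h1 := Nat.succ_choose_two (b + 1)
    have h2 := Nat.choose_le_choose 2 (show b + 1 + 1 ≤ c + 1 by omega)
    by_cases hcn : c ≤ n
    · refine (((vanishesBelow_coeff_qFallingProd t a).mul (coeff_Apoly n hcn).1).mono ?_)
      omega
    · rw [coeff_eq_zero_of_natDegree_lt ((natDegree_Apoly_le n).trans_lt (by omega : n < c)),
        mul_zero]
      exact vanishesBelow_zero _
  obtain ⟨hA, hA1⟩ := coeff_Apoly n hb
  have hlead : (qFallingProd t).coeff t = 1 := by
    simpa [natDegree_qFallingProd] using (monic_qFallingProd t).coeff_natDegree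
  rw [coeff_mul, ← Finset.add_sum_erase _ _
    (HasAntidiagonal.mem_antidiagonal.2 rfl : (t, b) ∈ antidiagonal (t + b)), hlead, one_mul]
  refine ⟨hA.add (hrest.mono (by omega)), ?_⟩
  rw [AddMonoidAlgebra.coeff_add, Finsupp.add_apply, hA1, hrest _ (by omega), add_zero]

theorem statement15 (m : ℕ) (π : Equiv.Perm (Fin m))
    (s : ℕ) (hs : desNum m π = s) (hs1 : 1 ≤ s)
    (k : ℕ) (hks : s ≤ k) (hkm : k ≤ m) :
    tpoly m π k ≠ 0 ∧
    IsLeast {i : ℤ | (tpoly m π k).coeff i ≠ 0}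
      ((majIdx m π : ℤ) - k * s + k * (k + 1) / 2) := by
  set c : ℤ := majIdx m π - (s * (s - 1) / 2 : ℕ)
  have htpoly :
      tpoly m π k = T c * (qFallingProd (s - 1) * Apoly (m - s)).coeff (s - 1 + (k - s)) := by
    rw [tpoly, tSummand, hs, mul_assoc, coeff_C_mul, show k - 1 = s - 1 + (k - s) by omega]
    rfl
  have hexp : (majIdx m π : ℤ) - k * s + k * (k + 1) / 2 = c + ((k - s + 1).choose 2 : ℕ) := by
    have := congrArg (Nat.cast : ℕ → ℤ) (Nat.succ_choose_two_add_choose_two hks)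
    push_cast at this
    rw [← Int.natCast_succ_choose_two,
      show c = majIdx m π - (s.choose 2 : ℕ) by rw [Nat.choose_two_right]]
    linarith
  obtain ⟨hvan, hone⟩ := coeff_qFallingProd_mul_Apoly (s - 1) (show k - s ≤ m - s by omega)
  have hleast := (hvan.T_mul c).isLeast <| by
    rw [coeff_T_mul, add_sub_cancel_left, hone]
    exact one_ne_zero
  rw [htpoly, hexp]
  exact ⟨fun h => hleast.1 (by rw [h]; rfl), hleast⟩
end

section
/- Let m ≥ 1 and 0 ≤ k ≤ m be integers and let A(q,x) = Π_{i=1}^m (q^i x + [i]_q) ∈ ℤ[q,x]. Then the coefficient of x^k in A(q,x) is a nonzero polynomial in q with q_max([x^k]A) = m(m−1)/2 + k and q_min([x^k]A) = k(k+1)/2. -/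
open Finset Polynomial LaurentPolynomial

attribute [local instance] Classical.propDecidable

namespace Polynomial

variable {R : Type*} [Semiring R] [PartialOrder R]

section OrderedAddMonoid

variable [IsOrderedAddMonoid R] {f g : R[X]}

lemma coeff_add_eq_zero_iff_of_coeff_nonneg (hf : ∀ i, 0 ≤ f.coeff i)
    (hg : ∀ i, 0 ≤ g.coeff i) (n : ℕ) :
    (f + g).coeff n = 0 ↔ f.coeff n = 0 ∧ g.coeff n = 0 := by
  rw [coeff_add, add_eq_zero_iff_of_nonneg (hf n) (hg n)]

lemma add_ne_zero_of_coeff_nonneg (hf : ∀ i, 0 ≤ f.coeff i) (hg : ∀ i, 0 ≤ g.coeff i)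
    (hf0 : f ≠ 0) : f + g ≠ 0 := fun h => hf0 <| ext fun i => by
  simpa using ((coeff_add_eq_zero_iff_of_coeff_nonneg hf hg i).1 (by simp [h])).1

lemma natDegree_add_of_coeff_nonneg (hf : ∀ i, 0 ≤ f.coeff i) (hg : ∀ i, 0 ≤ g.coeff i) :
    (f + g).natDegree = max f.natDegree g.natDegree := by
  have key := coeff_add_eq_zero_iff_of_coeff_nonneg hf hg
  refine le_antisymm (natDegree_add_le f g) (max_le ?_ ?_)
  · rcases eq_or_ne f 0 with rfl | hf0
    · simp
    · exact le_natDegree_of_ne_zero fun h => hf0 (leadingCoeff_eq_zero.1 ((key _).1 h).1)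
  · rcases eq_or_ne g 0 with rfl | hg0
    · simp
    · exact le_natDegree_of_ne_zero fun h => hg0 (leadingCoeff_eq_zero.1 ((key _).1 h).2)

lemma natTrailingDegree_add_of_coeff_nonneg (hf : ∀ i, 0 ≤ f.coeff i)
    (hg : ∀ i, 0 ≤ g.coeff i) (hf0 : f ≠ 0) (hg0 : g ≠ 0) :
    (f + g).natTrailingDegree = min f.natTrailingDegree g.natTrailingDegree := by
  have key := coeff_add_eq_zero_iff_of_coeff_nonneg hf hg
  refine le_antisymm (le_min ?_ ?_)
    (le_natTrailingDegree (add_ne_zero_of_coeff_nonneg hf hg hf0) fun n hn => (key n).2 ?_)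
  · exact natTrailingDegree_le_of_ne_zero fun h => hf0 (trailingCoeff_eq_zero.1 ((key _).1 h).1)
  · exact natTrailingDegree_le_of_ne_zero fun h => hg0 (trailingCoeff_eq_zero.1 ((key _).1 h).2)
  · exact ⟨coeff_eq_zero_of_lt_natTrailingDegree (lt_min_iff.1 hn).1,
      coeff_eq_zero_of_lt_natTrailingDegree (lt_min_iff.1 hn).2⟩

end OrderedAddMonoid

lemma coeff_mul_nonneg [IsOrderedRing R] {f g : R[X]} (hf : ∀ i, 0 ≤ f.coeff i)
    (hg : ∀ i, 0 ≤ g.coeff i) (n : ℕ) : 0 ≤ (f * g).coeff n := by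
  rw [coeff_mul]
  exact Finset.sum_nonneg fun x _ => mul_nonneg (hf x.1) (hg x.2)

lemma coeff_X_pow_nonneg [IsOrderedRing R] (n j : ℕ) : 0 ≤ (X ^ n : R[X]).coeff j := by
  rw [coeff_X_pow]; split_ifs <;> simp

end Polynomial

lemma coeff_qIntP (n j : ℕ) : (qIntP n).coeff j = if j < n then 1 else 0 := by
  simp [qIntP, coeff_X_pow]

lemma coeff_qIntP_nonneg (n j : ℕ) : 0 ≤ (qIntP n).coeff j := by
  rw [coeff_qIntP]; split_ifs <;> norm_num

lemma qIntP_ne_zero {n : ℕ} (hn : 1 ≤ n) : qIntP n ≠ 0 := fun h => by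
  have h0 := congr_arg (coeff · 0) h
  simp only [coeff_qIntP, coeff_zero] at h0
  omega

lemma natDegree_qIntP (n : ℕ) : (qIntP n).natDegree = n - 1 := by
  rcases Nat.eq_zero_or_pos n with rfl | hn
  · simp [qIntP]
  refine le_antisymm (natDegree_le_iff_coeff_eq_zero.2 fun j hj => ?_)
    (le_natDegree_of_ne_zero ?_)
  · rw [coeff_qIntP, if_neg (by omega)]
  · rw [coeff_qIntP, if_pos (by omega)]; exact one_ne_zero

lemma natTrailingDegree_qIntP (n : ℕ) : (qIntP n).natTrailingDegree = 0 :=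
  natTrailingDegree_eq_zero.2 <| by
    rcases Nat.eq_zero_or_pos n with rfl | hn
    · simp [qIntP]
    · simp [coeff_qIntP, hn]

noncomputable def ApolyP (m : ℕ) : ℤ[X][X] :=
  ∏ i ∈ Icc 1 m, (Polynomial.C (X ^ i) * X + Polynomial.C (qIntP i))

lemma ApolyP_succ (m : ℕ) :
    ApolyP (m + 1) =
      ApolyP m * (Polynomial.C (X ^ (m + 1)) * X + Polynomial.C (qIntP (m + 1))) := by
  rw [ApolyP, ApolyP, prod_Icc_succ_top (by omega)]

lemma coeff_ApolyP_succ_zero (m : ℕ) :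
    (ApolyP (m + 1)).coeff 0 = (ApolyP m).coeff 0 * qIntP (m + 1) := by
  simp [ApolyP_succ, mul_add, ← mul_assoc, mul_coeff_zero]

lemma coeff_ApolyP_succ_succ (m k : ℕ) :
    (ApolyP (m + 1)).coeff (k + 1) =
      (ApolyP m).coeff k * X ^ (m + 1) + (ApolyP m).coeff (k + 1) * qIntP (m + 1) := by
  rw [ApolyP_succ, mul_add, coeff_add, ← mul_assoc, coeff_mul_C, coeff_mul_X, coeff_mul_C]

lemma coeff_ApolyP_eq_zero {m k : ℕ} (hk : m < k) : (ApolyP m).coeff k = 0 := by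
  refine coeff_eq_zero_of_natDegree_lt (lt_of_le_of_lt ?_ hk)
  refine (natDegree_prod_le _ _).trans ?_
  simp

lemma coeff_coeff_ApolyP_nonneg (m k i : ℕ) : 0 ≤ ((ApolyP m).coeff k).coeff i := by
  induction m generalizing k i with
  | zero =>
    rw [ApolyP, Icc_eq_empty_of_lt zero_lt_one, prod_empty, coeff_one]
    split_ifs <;> simp [coeff_one, apply_ite]
  | succ m ih =>
    cases k with
    | zero => exact coeff_ApolyP_succ_zero m ▸ coeff_mul_nonneg (ih 0) (coeff_qIntP_nonneg _) i
    | succ k =>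
      rw [coeff_ApolyP_succ_succ, coeff_add]
      exact add_nonneg (coeff_mul_nonneg (ih k) (coeff_X_pow_nonneg _) i)
        (coeff_mul_nonneg (ih (k + 1)) (coeff_qIntP_nonneg _) i)

lemma coeff_ApolyP_ne_zero_and_degrees {m k : ℕ} (hk : k ≤ m) :
    (ApolyP m).coeff k ≠ 0 ∧ ((ApolyP m).coeff k).natDegree = m.choose 2 + k ∧
      ((ApolyP m).coeff k).natTrailingDegree = (k + 1).choose 2 := by
  induction m generalizing k with
  | zero => simp [Nat.le_zero.1 hk, ApolyP]
  | succ m ih =>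
    have hq := qIntP_ne_zero (Nat.le_add_left 1 m)
    cases k with
    | zero =>
      obtain ⟨h0, hdeg, htrail⟩ := ih (Nat.zero_le m)
      rw [coeff_ApolyP_succ_zero]
      refine ⟨mul_ne_zero h0 hq, ?_, ?_⟩
      · rw [natDegree_mul h0 hq, hdeg, natDegree_qIntP, Nat.succ_choose_two]
        omega
      · rw [natTrailingDegree_mul h0 hq, htrail, natTrailingDegree_qIntP]; rfl
    | succ k =>
      obtain ⟨h0, hdeg, htrail⟩ := ih (Nat.le_of_succ_le_succ hk)
      rw [coeff_ApolyP_succ_succ]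
      rcases (Nat.le_of_succ_le_succ hk).eq_or_lt with rfl | hkm
      · rw [coeff_ApolyP_eq_zero (Nat.lt_succ_self k), zero_mul, add_zero]
        refine ⟨mul_ne_zero h0 (pow_ne_zero _ X_ne_zero), ?_, ?_⟩
        · rw [natDegree_mul_X_pow _ h0, hdeg, Nat.succ_choose_two]
        · rw [natTrailingDegree_mul_X_pow h0, htrail, Nat.succ_choose_two (k + 1)]
      obtain ⟨h0', hdeg', htrail'⟩ := ih (Nat.succ_le_of_lt hkm)
      have hf := coeff_mul_nonneg (coeff_coeff_ApolyP_nonneg m k) (coeff_X_pow_nonneg (m + 1))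
      have hg :=
        coeff_mul_nonneg (coeff_coeff_ApolyP_nonneg m (k + 1)) (coeff_qIntP_nonneg (m + 1))
      have hf0 := mul_ne_zero h0 (pow_ne_zero (m + 1) (X_ne_zero (R := ℤ)))
      have hg0 := mul_ne_zero h0' hq
      refine ⟨add_ne_zero_of_coeff_nonneg hf hg hf0, ?_, ?_⟩
      · rw [natDegree_add_of_coeff_nonneg hf hg, natDegree_mul_X_pow _ h0,
          natDegree_mul h0' hq, hdeg, hdeg', natDegree_qIntP, Nat.succ_choose_two]
        omega
      · rw [natTrailingDegree_add_of_coeff_nonneg hf hg hf0 hg0, natTrailingDegree_mul_X_pow h0,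
          natTrailingDegree_mul h0' hq, htrail, htrail', natTrailingDegree_qIntP,
          Nat.succ_choose_two (k + 1)]
        omega

namespace Polynomial

variable {R : Type*} [Semiring R] {p : R[X]}

lemma setOf_coeff_toLaurent_ne_zero :
    {i : ℤ | (toLaurent p).coeff i ≠ 0} = ((↑) : ℕ → ℤ) '' p.support := by
  ext i
  rw [Set.mem_ofPred_eq, ← Finsupp.mem_support_iff, support_coeff_toLaurent]
  simp

lemma isGreatest_coeff_toLaurent_ne_zero (hp : p ≠ 0) :
    IsGreatest {i : ℤ | (toLaurent p).coeff i ≠ 0} p.natDegree := by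
  rw [setOf_coeff_toLaurent_ne_zero, Nat.strictMono_cast.map_isGreatest,
    natDegree_eq_support_max' hp]
  exact Finset.isGreatest_max' _ _

lemma isLeast_coeff_toLaurent_ne_zero (hp : p ≠ 0) :
    IsLeast {i : ℤ | (toLaurent p).coeff i ≠ 0} p.natTrailingDegree := by
  rw [setOf_coeff_toLaurent_ne_zero, Nat.strictMono_cast.map_isLeast,
    natTrailingDegree_eq_support_min' hp]
  exact Finset.isLeast_min' _ _

end Polynomial

lemma toLaurent_qIntP (n : ℕ) : toLaurent (qIntP n) = qInt n := by
  simp [qIntP, qInt]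

lemma Apoly_eq_map_ApolyP (m : ℕ) : Apoly m = (ApolyP m).map toLaurent := by
  rw [Apoly, ApolyP, Polynomial.map_prod]
  refine prod_congr rfl fun i _ => ?_
  simp only [Polynomial.map_add, Polynomial.map_mul, map_C, map_X, Polynomial.toLaurent_X_pow,
    toLaurent_qIntP]

theorem statement17_general (m : ℕ) (k : ℕ) (hk : k ≤ m) :
    (Apoly m).coeff k ≠ 0 ∧
    IsGreatest {i : ℤ | ((Apoly m).coeff k).coeff i ≠ 0} ((m * (m - 1) / 2 + k : ℕ) : ℤ) ∧
    IsLeast {i : ℤ | ((Apoly m).coeff k).coeff i ≠ 0} ((k * (k + 1) / 2 : ℕ) : ℤ) := by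
  obtain ⟨h0, hdeg, htrail⟩ := coeff_ApolyP_ne_zero_and_degrees hk
  have hk2 : k * (k + 1) / 2 = (k + 1).choose 2 := by
    rw [Nat.choose_two_right, Nat.add_sub_cancel, mul_comm]
  rw [Apoly_eq_map_ApolyP, coeff_map, ← Nat.choose_two_right, hk2, ← hdeg, ← htrail]
  exact ⟨toLaurent_ne_zero.2 h0, isGreatest_coeff_toLaurent_ne_zero h0,
    isLeast_coeff_toLaurent_ne_zero h0⟩

theorem statement17 (m : ℕ) (hm : 1 ≤ m) (k : ℕ) (hk : k ≤ m) :
    (Apoly m).coeff k ≠ 0 ∧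
    IsGreatest {i : ℤ | ((Apoly m).coeff k).coeff i ≠ 0} ((m * (m - 1) / 2 + k : ℕ) : ℤ) ∧
    IsLeast {i : ℤ | ((Apoly m).coeff k).coeff i ≠ 0} ((k * (k + 1) / 2 : ℕ) : ℤ) :=
  statement17_general m k hk
end
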